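/- arXiv:2203.14420 — 11 statements merged into one kernel-verified Lean document; each statement's English description precedes it below -/
import Mathlib

section
/- Let $G$ be a finite abelian group, let $H$ be a subgroup of $G$, let $\widehat{G}$ denote the group of characters of $G$ with values in $\mathbb{C}^\times$, let $\widehat{G}_H := \{\chi \in \widehat{G} \mid \chi(h) = 1 \text{ for all } h \in H\}$, and let $X \subseteq \widehat{G}$ be a complete set of representatives of the cosets of $\widehat{G}_H$ in $\widehat{G}$ (so $\widehat{G}$ is the disjoint union of the cosets $\chi\widehat{G}_H$ for $\chi \in X$). Then for any $x : G \to \mathbb{C}$, the group determinant satisfies $\Theta_G(x) = \prod_{\chi \in X} \Theta_{G/H}\big(y^{\chi}\big)$, where for each coset $C \in G/H$ one sets $y^{\chi}_{C} := \sum_{g \in C} \chi(g)\, x_g$. -/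
/-!
Characters diagonalise the group matrix: for a character `χ` the vector `g ↦ χ g⁻¹` is an
eigenvector of `(x (g * h⁻¹))_{g,h}` with eigenvalue `∑ g, χ g * x g`, and by orthogonality these
eigenvectors form an invertible matrix. Hence `Θ_G(x) = ∏_χ ∑_g χ(g) x_g` (Dedekind).

Every character of `G` is uniquely `ψ * (φ ∘ π)` with `ψ ∈ X` and `φ` a character of `G/H`, where
`π : G → G/H`. Summing over the fibres of `π` gives `∑_g ψ(g) φ(π g) x_g = ∑_C φ(C) y^ψ_C`, so
Dedekind's factorisation for `G/H` regroups the product for `G` by the cosets `ψ Ĝ_H`.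
-/

open scoped Classical

/-- The group determinant of a finite group `G`: the determinant of the matrix whose
`(g, h)` entry is `x (g * h⁻¹)`. -/
noncomputable def groupDet (G : Type*) [Group G] [Fintype G] {R : Type*} [CommRing R]
    (x : G → R) : R :=
  Matrix.det (Matrix.of fun g h : G => x (g * h⁻¹))

open Finset Matrix

section Dedekind

variable {G K : Type*} [CommGroup G] [Fintype G] [CommRing K]

def groupMatrix (x : G → K) : Matrix G G K :=
  of fun g h => x (g * h⁻¹)

def charMatrix {ι : Type*} (χ : ι → G →* Kˣ) : Matrix G ι K :=
  of fun g i => (χ i g⁻¹ : K)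

theorem groupMatrix_mul_charMatrix {ι : Type*} [Fintype ι] [DecidableEq ι] (x : G → K)
    (χ : ι → G →* Kˣ) :
    groupMatrix x * charMatrix χ = charMatrix χ * diagonal fun i => ∑ g, (χ i g : K) * x g := by
  ext g i
  rw [mul_diagonal, mul_apply, mul_sum]
  simp only [groupMatrix, charMatrix, of_apply]
  refine Fintype.sum_equiv (Equiv.divLeft g) _ _ fun k => ?_
  rw [Equiv.divLeft_apply, div_eq_mul_inv, ← mul_assoc, ← Units.val_mul, ← map_mul,
    inv_mul_cancel_left, mul_comm]

variable [IsDomain K]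

theorem MonoidHom.sum_units_apply_eq_zero {χ : G →* Kˣ} (hχ : χ ≠ 1) : ∑ g, (χ g : K) = 0 :=
  sum_hom_units_eq_zero ((Units.coeHom K).comp χ) fun h =>
    hχ <| MonoidHom.ext fun g => Units.ext (DFunLike.congr_fun h g)

theorem sum_apply_mul_apply_inv [DecidableEq (G →* Kˣ)] (χ ψ : G →* Kˣ) :
    ∑ g, (χ g : K) * (ψ g⁻¹ : K) = if χ = ψ then (Fintype.card G : K) else 0 := by
  have hval : ∀ g, (χ g : K) * (ψ g⁻¹ : K) = ((χ * ψ⁻¹) g : K) := fun g => by simp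
  simp only [hval]
  split_ifs with h
  · simp [h]
  · exact MonoidHom.sum_units_apply_eq_zero (mul_inv_eq_one.not.mpr h)

theorem det_charMatrix_ne_zero {χ : G → G →* Kˣ} (hχ : χ.Injective)
    (hG : (Fintype.card G : K) ≠ 0) : (charMatrix χ).det ≠ 0 := by
  have horth : (of fun i g => (χ i g : K)) * charMatrix χ = (Fintype.card G : K) • 1 := by
    ext i j
    simp only [mul_apply, of_apply, charMatrix, sum_apply_mul_apply_inv, hχ.eq_iff,
      Matrix.smul_apply, one_apply, smul_eq_mul, mul_ite, mul_one, mul_zero]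
  intro h
  have := congrArg det horth
  rw [det_mul, h, mul_zero, det_smul, det_one, mul_one] at this
  exact pow_ne_zero _ hG this.symm

theorem Matrix.det_eq_prod_of_mul_eq_mul_diagonal {n : Type*} [Fintype n] [DecidableEq n]
    {M U : Matrix n n K} {d : n → K} (hU : U.det ≠ 0) (h : M * U = U * diagonal d) :
    M.det = ∏ i, d i :=
  mul_right_cancel₀ hU <| by rw [← det_mul, h, det_mul, det_diagonal, mul_comm]

theorem groupDet_eq_prod_sum [HasEnoughRootsOfUnity K (Monoid.exponent G)]
    [Fintype (G →* Kˣ)] (hG : (Fintype.card G : K) ≠ 0) (x : G → K) :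
    groupDet G x = ∏ χ : G →* Kˣ, ∑ g, (χ g : K) * x g := by
  obtain ⟨e⟩ := CommGroup.monoidHom_mulEquiv_of_hasEnoughRootsOfUnity G K
  rw [← e.symm.prod_comp]
  exact det_eq_prod_of_mul_eq_mul_diagonal (det_charMatrix_ne_zero e.symm.injective hG)
    (groupMatrix_mul_charMatrix x _)

end Dedekind

theorem Finset.sum_mul_sum_fiberwise {α β R : Type*} [Fintype α] [Fintype β] [DecidableEq β]
    [CommSemiring R] (π : α → β) (w : β → R) (f : α → R) :
    ∑ b, w b * ∑ a ∈ univ.filter (fun a => π a = b), f a = ∑ a, w (π a) * f a := by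
  simp_rw [mul_sum]
  rw [← sum_fiberwise univ π fun a => w (π a) * f a]
  refine sum_congr rfl fun b _ => sum_congr rfl fun a ha => ?_
  rw [(mem_filter.mp ha).2]

namespace QuotientGroup

variable {G M : Type*} [CommGroup G] [CommGroup M] (H : Subgroup G)

theorem exists_comp_mk'_eq_iff (θ : G →* M) :
    (∃ φ : G ⧸ H →* M, φ.comp (mk' H) = θ) ↔ ∀ h ∈ H, θ h = 1 := by
  constructor
  · rintro ⟨φ, rfl⟩ h hh
    simp [(eq_one_iff h).mpr hh]
  · intro hθ
    exact ⟨lift H θ hθ, MonoidHom.ext fun g => rfl⟩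

theorem exists_mul_comp_mk'_eq_iff (ψ θ : G →* M) :
    (∃ φ : G ⧸ H →* M, ψ * φ.comp (mk' H) = θ) ↔ ∀ h ∈ H, (ψ⁻¹ * θ) h = 1 := by
  simp only [← exists_comp_mk'_eq_iff, eq_inv_mul_iff_mul_eq]

theorem bijective_mul_comp_mk' {X : Set (G →* M)}
    (hX : ∀ χ : G →* M, ∃! ψ : G →* M, ψ ∈ X ∧ ∀ h ∈ H, (ψ⁻¹ * χ) h = 1) :
    Function.Bijective fun p : X × (G ⧸ H →* M) => (p.1 : G →* M) * p.2.comp (mk' H) := by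
  constructor
  · rintro ⟨⟨χ₁, hχ₁⟩, φ₁⟩ ⟨⟨χ₂, hχ₂⟩, φ₂⟩ heq
    obtain ⟨ψ, -, huniq⟩ := hX (χ₁ * φ₁.comp (mk' H))
    have h₁ : χ₁ = ψ := huniq χ₁ ⟨hχ₁, (exists_mul_comp_mk'_eq_iff H _ _).mp ⟨φ₁, rfl⟩⟩
    have h₂ : χ₂ = ψ := huniq χ₂ ⟨hχ₂, (exists_mul_comp_mk'_eq_iff H _ _).mp ⟨φ₂, heq.symm⟩⟩
    subst h₁ h₂
    have hφ : φ₁ = φ₂ :=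
      (MonoidHom.cancel_right (mk'_surjective H)).mp (mul_left_cancel heq)
    rw [hφ]
  · intro θ
    obtain ⟨ψ, ⟨hψ, htriv⟩, -⟩ := hX θ
    obtain ⟨φ, hφ⟩ := (exists_mul_comp_mk'_eq_iff H ψ θ).mpr htriv
    exact ⟨(⟨ψ, hψ⟩, φ), hφ⟩

end QuotientGroup

/-- For a finite abelian group `G`, a subgroup `H`, and a complete set `X`
of representatives of the cosets of `Ĝ_H` in `Ĝ`, the group determinant factors as
`Θ_G(x) = ∏_{χ ∈ X} Θ_{G/H}(y^χ)` where `y^χ_C = ∑_{g ∈ C} χ(g) x_g`. -/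
theorem groupDet_eq_prod_groupDet_quotient {G : Type*} [CommGroup G] [Fintype G]
    (H : Subgroup G) (X : Finset (G →* ℂˣ))
    (hX : ∀ χ : G →* ℂˣ, ∃! ψ : G →* ℂˣ, ψ ∈ X ∧ ∀ h ∈ H, (ψ⁻¹ * χ) h = 1)
    (x : G → ℂ) :
    groupDet G x =
      ∏ χ ∈ X, groupDet (G ⧸ H) (fun C : G ⧸ H =>
        ∑ g ∈ Finset.univ.filter (fun g : G => (QuotientGroup.mk g : G ⧸ H) = C),
          (χ g : ℂ) * x g) := by
  have := Fintype.ofFinite (G →* ℂˣ)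
  have := Fintype.ofFinite (G ⧸ H →* ℂˣ)
  calc groupDet G x = ∏ θ : G →* ℂˣ, ∑ g, (θ g : ℂ) * x g := groupDet_eq_prod_sum (by simp) x
    _ = ∏ p : ↥(X : Set (G →* ℂˣ)) × (G ⧸ H →* ℂˣ),
          ∑ g, (((p.1 : G →* ℂˣ) * p.2.comp (QuotientGroup.mk' H)) g : ℂ) * x g :=
      ((QuotientGroup.bijective_mul_comp_mk' H hX).prod_comp _).symm
    _ = ∏ χ ∈ X, ∏ φ : G ⧸ H →* ℂˣ, ∑ g, ((χ * φ.comp (QuotientGroup.mk' H)) g : ℂ) * x g := by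
      rw [Fintype.prod_prod_type, ← prod_coe_sort X]
      rfl
    _ = _ := by
      refine prod_congr rfl fun χ _ => ?_
      rw [groupDet_eq_prod_sum (by simp)]
      refine prod_congr rfl fun φ _ => ?_
      rw [sum_mul_sum_fiberwise]
      refine sum_congr rfl fun g _ => ?_
      simp only [MonoidHom.mul_apply, MonoidHom.comp_apply, QuotientGroup.mk'_apply, Units.val_mul]
      ring
end

section
/- Let $G$ be a finite abelian group, let $H$ be a subgroup of $G$, let $\widehat{G}$ denote the group of characters of $G$ with values in $\mathbb{C}^\times$, let $\widehat{G}_H := \{\chi \in \widehat{G} \mid \chi(h) = 1 \text{ for all } h \in H\}$, and let $X \subseteq \widehat{G}$ be a complete set of representatives of the cosets of $\widehat{G}_H$ in $\widehat{G}$. For $x : G \to \mathbb{C}$ define, for each coset $C \in G/H$ and $\chi \in X$, $y^{\chi}_{C} := \sum_{g \in C} \chi(g)\, x_g$, and for each $h \in H$ define $z_h := \frac{1}{|H|} \sum_{\chi \in X} \chi(h)^{-1}\, \Theta_{G/H}\big(y^{\chi}\big)$. Then $\Theta_G(x) = \Theta_H(z)$, i.e., the group determinant of $G$ evaluated at $x$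 equals the group determinant of $H$ evaluated at the function $h \mapsto z_h$. -/
/-!
The group matrix of a finite abelian group `A` is diagonalised by its characters (Dedekind), so
`Θ_A(x) = ∏_χ ∑_a χ(a) x_a`. Every character of `G` is uniquely `ψ · (ρ ∘ π)` with `ψ ∈ X` and
`ρ` a character of `G/H`, so grouping the factors of `Θ_G(x)` by `ψ` gives
`∏_{ψ ∈ X} Θ_{G/H}(y^ψ)`. Restriction to `H` maps `X` bijectively onto the characters of `H`,
and `z` is by construction the inverse Fourier transform on `H` of `ψ|_H ↦ Θ_{G/H}(y^ψ)`, so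
`Θ_H(z)` is the same product.
-/

open scoped Classical

open Finset Matrix

noncomputable instance (A : Type*) [CommGroup A] [Finite A] : Fintype (A →* ℂˣ) :=
  Fintype.ofFinite _

section Dedekind

variable {A : Type*} [CommGroup A]

theorem mulVec_groupMatrix_charInv [Fintype A] (x : A → ℂ) (χ : A →* ℂˣ) :
    (Matrix.of fun g h : A => x (g * h⁻¹)) *ᵥ (fun g => ((χ⁻¹ g : ℂˣ) : ℂ)) =
      (∑ a, (χ a : ℂ) * x a) • fun g => ((χ⁻¹ g : ℂˣ) : ℂ) := by
  ext g
  simp only [mulVec, dotProduct, of_apply, Pi.smul_apply, smul_eq_mul, sum_mul]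
  refine Fintype.sum_equiv (Equiv.divLeft g) _ _ fun a => ?_
  simp only [MonoidHom.inv_apply, Units.val_inv_eq_inv_val, Equiv.divLeft_apply, div_eq_mul_inv,
    map_mul, map_inv, Units.val_mul]
  field_simp

theorem linearIndependent_charInv :
    LinearIndependent ℂ fun (χ : A →* ℂˣ) (g : A) => ((χ⁻¹ g : ℂˣ) : ℂ) :=
  (linearIndependent_monoidHom A ℂ).comp (fun χ => (Units.coeHom ℂ).comp χ⁻¹) fun _ _ h =>
    inv_injective <| MonoidHom.ext fun a => Units.ext (DFunLike.congr_fun h a)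

variable [Fintype A]

theorem groupDet_eq_prod_sum_char (x : A → ℂ) :
    groupDet A x = ∏ χ : A →* ℂˣ, ∑ a, (χ a : ℂ) * x a := by
  have hcard : Fintype.card (A →* ℂˣ) = Module.finrank ℂ (A → ℂ) := by
    rw [Module.finrank_fintype_fun_eq_card, Fintype.card_eq_nat_card, Fintype.card_eq_nat_card,
      CommGroup.card_monoidHom_of_hasEnoughRootsOfUnity]
  let b := basisOfLinearIndependentOfCardEqFinrank linearIndependent_charInv hcard
  have hdiag : LinearMap.toMatrix b b (Matrix.toLin' (Matrix.of fun g h : A => x (g * h⁻¹))) =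
      Matrix.diagonal fun χ => ∑ a, (χ a : ℂ) * x a := by
    have hb : ⇑b = fun (χ : A →* ℂˣ) (g : A) => ((χ⁻¹ g : ℂˣ) : ℂ) :=
      coe_basisOfLinearIndependentOfCardEqFinrank _ _
    ext χ ψ
    have heig : Matrix.toLin' (Matrix.of fun g h : A => x (g * h⁻¹)) (b ψ) =
        (∑ a, (ψ a : ℂ) * x a) • b ψ := by
      rw [hb, Matrix.toLin'_apply, mulVec_groupMatrix_charInv]
    rw [LinearMap.toMatrix_apply, heig, map_smul, b.repr_self]
    by_cases h : χ = ψ <;> simp [h]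
  rw [groupDet, ← LinearMap.det_toLin', ← LinearMap.det_toMatrix b, hdiag, Matrix.det_diagonal]

theorem sum_char_mul_inv_char (φ ψ : A →* ℂˣ) :
    ∑ a, (φ a : ℂ) * ((ψ a)⁻¹ : ℂˣ) = if φ = ψ then (Nat.card A : ℂ) else 0 := by
  have hcoe : (Units.coeHom ℂ).comp (φ * ψ⁻¹) = 1 ↔ φ = ψ := by
    rw [← mul_inv_eq_one (a := φ)]
    exact ⟨fun h => MonoidHom.ext fun a => Units.ext (DFunLike.congr_fun h a),
      fun h => by simp [h]⟩
  simpa [hcoe, Nat.card_eq_fintype_card] using sum_hom_units ((Units.coeHom ℂ).comp (φ * ψ⁻¹))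

theorem groupDet_inv_fourier_eq_prod_of_bijOn {ι : Type*} {s : Finset ι} {e : ι → A →* ℂˣ}
    (he : Set.BijOn e s Set.univ) (c : ι → ℂ) :
    groupDet A (fun a => (Nat.card A : ℂ)⁻¹ * ∑ i ∈ s, (((e i a)⁻¹ : ℂˣ) : ℂ) * c i) =
      ∏ i ∈ s, c i := by
  have hA : (Nat.card A : ℂ) ≠ 0 := Nat.cast_ne_zero.mpr Nat.card_pos.ne'
  rw [groupDet_eq_prod_sum_char]
  refine (prod_nbij e (fun _ _ => mem_univ _) he.injOn (by simpa using he.surjOn)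
    fun i hi => ?_).symm
  calc c i = (Nat.card A : ℂ)⁻¹ * ∑ j ∈ s, (if e i = e j then (Nat.card A : ℂ) else 0) * c j := by
        rw [sum_eq_single_of_mem i hi fun j hj hji => by
          rw [if_neg (he.injOn.ne hi hj hji.symm), zero_mul], if_pos rfl, inv_mul_cancel_left₀ hA]
    _ = ∑ a, (e i a : ℂ) * ((Nat.card A : ℂ)⁻¹ * ∑ j ∈ s, (((e j a)⁻¹ : ℂˣ) : ℂ) * c j) := by
        simp_rw [← sum_char_mul_inv_char, mul_sum, sum_mul]
        rw [sum_comm]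
        refine sum_congr rfl fun _ _ => ?_
        rw [mul_sum]
        exact sum_congr rfl fun _ _ => by ring

end Dedekind

section Subgroup

variable {G : Type*} [CommGroup G] (H : Subgroup G)

theorem groupDet_quotient_sum_fiber_eq_prod [Fintype G] (f : G → ℂ) :
    groupDet (G ⧸ H) (fun C : G ⧸ H => ∑ g ∈ univ.filter (fun g : G => (g : G ⧸ H) = C), f g) =
      ∏ ρ : (G ⧸ H) →* ℂˣ, ∑ g : G, (ρ g : ℂ) * f g := by
  rw [groupDet_eq_prod_sum_char]
  refine prod_congr rfl fun ρ _ => ?_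
  simp_rw [mul_sum]
  rw [← sum_fiberwise univ (fun g : G => (g : G ⧸ H))]
  exact sum_congr rfl fun C _ => sum_congr rfl fun g hg => by rw [(mem_filter.mp hg).2]

theorem forall_inv_mul_apply_eq_one_iff {M : Type*} [CommGroup M] (ψ χ : G →* M) :
    (∀ h ∈ H, (ψ⁻¹ * χ) h = 1) ↔ ψ.domRestrict H = χ.domRestrict H := by
  simp [DFunLike.ext_iff, inv_mul_eq_one]

theorem domRestrict_comp_mk'_mul {M : Type*} [CommGroup M] (ρ : (G ⧸ H) →* M) (χ : G →* M) :
    (ρ.comp (QuotientGroup.mk' H) * χ).domRestrict H = χ.domRestrict H := by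
  ext h
  simp [(QuotientGroup.eq_one_iff (h : G)).mpr h.2]

variable [Finite G] {H} {X : Finset (G →* ℂˣ)}
  (hX : ∀ χ : G →* ℂˣ, ∃! ψ : G →* ℂˣ, ψ ∈ X ∧ ∀ h ∈ H, (ψ⁻¹ * χ) h = 1)
include hX

theorem bijOn_domRestrict : Set.BijOn (fun χ : G →* ℂˣ => χ.domRestrict H) X Set.univ := by
  simp_rw [forall_inv_mul_apply_eq_one_iff] at hX
  refine ⟨fun _ _ => Set.mem_univ _, fun χ₁ h₁ χ₂ h₂ heq => (hX χ₂).unique ⟨h₁, heq⟩ ⟨h₂, rfl⟩,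
    fun φ _ => ?_⟩
  obtain ⟨χ, rfl⟩ := MonoidHom.domRestrict_surjective ℂ H φ
  obtain ⟨ψ, ⟨hψ, hres⟩, -⟩ := hX χ
  exact ⟨ψ, hψ, hres⟩

theorem bijOn_comp_mk'_mul :
    Set.BijOn (fun p : (G →* ℂˣ) × ((G ⧸ H) →* ℂˣ) => p.2.comp (QuotientGroup.mk' H) * p.1)
      ↑(X ×ˢ (univ : Finset ((G ⧸ H) →* ℂˣ))) Set.univ := by
  refine ⟨fun _ _ => Set.mem_univ _, ?_, fun χ _ => ?_⟩
  · rintro ⟨χ₁, ρ₁⟩ h₁ ⟨χ₂, ρ₂⟩ h₂ heq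
    simp only [coe_product, coe_univ, Set.mem_prod, mem_coe, Set.mem_univ, and_true] at h₁ h₂
    obtain rfl : χ₁ = χ₂ := (bijOn_domRestrict hX).injOn h₁ h₂ <| by
      simpa only [domRestrict_comp_mk'_mul] using congrArg (MonoidHom.domRestrict · H) heq
    obtain rfl : ρ₁ = ρ₂ :=
      (MonoidHom.cancel_right (QuotientGroup.mk'_surjective H)).mp (mul_right_cancel heq)
    rfl
  · obtain ⟨ψ, ⟨hψ, hker⟩, -⟩ := hX χ
    refine ⟨(ψ, QuotientGroup.lift H (ψ⁻¹ * χ) hker), by simpa using hψ, ?_⟩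
    exact MonoidHom.ext fun g => inv_mul_cancel_comm (ψ g) (χ g)

theorem prod_char_eq_prod_mem_prod_comp_mk'_mul {M : Type*} [CommMonoid M] (f : (G →* ℂˣ) → M) :
    ∏ χ, f χ = ∏ ψ ∈ X, ∏ ρ : (G ⧸ H) →* ℂˣ, f (ρ.comp (QuotientGroup.mk' H) * ψ) := by
  have hbij := bijOn_comp_mk'_mul hX
  rw [← prod_product']
  exact (prod_nbij _ (fun _ _ => mem_univ _) hbij.injOn (by simpa using hbij.surjOn)
    fun _ _ => rfl).symm

end Subgroup

/-- With `y^χ_C = ∑_{g ∈ C} χ(g) x_g` and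
`z_h = (1/|H|) ∑_{χ ∈ X} χ(h)⁻¹ Θ_{G/H}(y^χ)`, we have `Θ_G(x) = Θ_H(z)`. -/
theorem groupDet_eq_groupDet_subgroup {G : Type*} [CommGroup G] [Fintype G]
    (H : Subgroup G) (X : Finset (G →* ℂˣ))
    (hX : ∀ χ : G →* ℂˣ, ∃! ψ : G →* ℂˣ, ψ ∈ X ∧ ∀ h ∈ H, (ψ⁻¹ * χ) h = 1)
    (x : G → ℂ) :
    groupDet G x =
      groupDet H (fun h : H =>
        (Nat.card H : ℂ)⁻¹ *
          ∑ χ ∈ X, ((χ (h : G))⁻¹ : ℂˣ) *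
            groupDet (G ⧸ H) (fun C : G ⧸ H =>
              ∑ g ∈ Finset.univ.filter (fun g : G => (QuotientGroup.mk g : G ⧸ H) = C),
                (χ g : ℂ) * x g)) := by
  refine Eq.trans ?_ (groupDet_inv_fourier_eq_prod_of_bijOn (bijOn_domRestrict hX) _).symm
  rw [groupDet_eq_prod_sum_char, prod_char_eq_prod_mem_prod_comp_mk'_mul hX]
  refine prod_congr rfl fun ψ _ => ?_
  rw [groupDet_quotient_sum_fiber_eq_prod]
  refine prod_congr rfl fun ρ _ => sum_congr rfl fun g _ => ?_
  simp [mul_assoc]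
end

section
/- Let $G$ be a finite abelian group, let $H$ be a subgroup of $G$, let $\widehat{G}$ denote the group of characters of $G$ with values in $\mathbb{C}^\times$, let $\widehat{G}_H := \{\chi \in \widehat{G} \mid \chi(h) = 1 \text{ for all } h \in H\}$, and let $X \subseteq \widehat{G}$ be a complete set of representatives of the cosets of $\widehat{G}_H$ in $\widehat{G}$. Work in the group algebra $R[G]$ where $R$ is the multivariate polynomial ring $\mathbb{C}[x_g : g \in G]$. For each coset $C \in G/H$ define the group algebra element $Y_C := \sum_{g \in C} x_g \cdot g \in R[G]$, and let $\Theta_{G/H}(Y) \in R[G]$ denote the group determinant polynomial of $G/H$ evaluated at the elements $Y_C$ (i.e., the determinant of the $|G/H| \times |G/H|$ matrix with $(C,D)$ entry $Y_{C D^{-1}}$). Then for each $h \in H$, the coefficient of $h$ in $\Theta_{G/H}(Y)$ is a polynomial with integer coefficients, and it equals $z_h := \frac{1}{|H|} \sum_{\chi \in X} \chi(h)^{-1}\, \Theta_{G/H}\big(y^{\chi}\big)$, where $y^{\chi}_{C} := \sum_{g \in C} \chi(g)\, x_g \in R$. -/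
/-!
Each `Y_C` is supported on the coset `C`, so every term `∏_C Y_{σ(C) C⁻¹}` of the determinant
is supported on `∏_C σ(C) C⁻¹ = 1`: the element `Θ_{G/H}(Y)` of `R[G]` is supported on `H`.
Evaluation at a character `χ` is a ring map `R[G] → R` sending `Y_C` to `y^χ_C`, hence
`Θ_{G/H}(y^χ) = ∑_g Θ_g χ(g)`. Restriction maps `X` bijectively onto the characters of `H`, so
orthogonality of the characters of `H` extracts `|H| Θ_h` from `∑_{χ ∈ X} χ(h)⁻¹ Θ_{G/H}(y^χ)`.
Integrality holds because the same determinant can be formed with integer coefficients.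
-/

open scoped Classical

theorem RingHom.map_groupDet {G R S : Type*} [Group G] [Fintype G] [CommRing R] [CommRing S]
    (f : R →+* S) (x : G → R) : f (groupDet G x) = groupDet G (f ∘ x) := by
  rw [groupDet, RingHom.map_det]
  rfl

namespace MonoidAlgebra

variable (R : Type*) {M ι : Type*} [CommSemiring R]

def gradeBy (f : M → ι) (i : ι) : Submodule R (MonoidAlgebra R M) where
  carrier := {a | ∀ m ∈ a.coeff.support, f m = i}
  zero_mem' m h := by cases h
  add_mem' {a b} ha hb m h := by
    classical exact (Finset.mem_union.mp (Finsupp.support_add h)).elim (ha m) (hb m)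
  smul_mem' _ _ h := Set.Subset.trans Finsupp.support_smul h

variable {R}

theorem coeff_eq_zero_of_mem_gradeBy {f : M → ι} {i : ι} {a : MonoidAlgebra R M}
    (ha : a ∈ gradeBy R f i) {m : M} (hm : f m ≠ i) : a.coeff m = 0 :=
  Finsupp.notMem_support_iff.mp fun h => hm (ha m h)

theorem single_mem_gradeBy (f : M → ι) (m : M) (r : R) :
    single m r ∈ gradeBy R f (f m) := by
  intro x hx
  rw [Finset.mem_singleton.mp (Finsupp.support_single_subset hx)]

theorem one_mem_gradeBy [Monoid M] [Monoid ι] (f : M →* ι) :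
    (1 : MonoidAlgebra R M) ∈ gradeBy R f 1 := by
  simpa only [one_def, map_one] using single_mem_gradeBy f 1 (1 : R)

theorem mul_mem_gradeBy [Monoid M] [Monoid ι] (f : M →* ι) {i j : ι} {a b : MonoidAlgebra R M}
    (ha : a ∈ gradeBy R f i) (hb : b ∈ gradeBy R f j) : a * b ∈ gradeBy R f (i * j) := by
  classical
  intro m hm
  obtain ⟨ma, hma, mb, hmb, rfl⟩ := Finset.mem_mul.mp (support_coeff_mul_subset a b hm)
  rw [map_mul, ha ma hma, hb mb hmb]

theorem prod_mem_gradeBy {κ : Type*} [CommMonoid M] [CommMonoid ι] (f : M →* ι)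
    (s : Finset κ) (i : κ → ι) (a : κ → MonoidAlgebra R M)
    (ha : ∀ k ∈ s, a k ∈ gradeBy R f (i k)) : ∏ k ∈ s, a k ∈ gradeBy R f (∏ k ∈ s, i k) := by
  induction s using Finset.cons_induction with
  | empty => simpa using one_mem_gradeBy f
  | cons k s hk ih =>
    simp only [Finset.prod_cons]
    exact mul_mem_gradeBy f (ha k (s.mem_cons_self k))
      (ih fun l hl => ha l (Finset.mem_cons_of_mem hl))

end MonoidAlgebra

open MonoidAlgebra in
theorem groupDet_mem_gradeBy_one {R M Q : Type*} [CommRing R] [CommMonoid M] [CommGroup Q]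
    [Fintype Q] (π : M →* Q) (Y : Q → MonoidAlgebra R M) (hY : ∀ q, Y q ∈ gradeBy R π q) :
    groupDet Q Y ∈ gradeBy R π 1 := by
  classical
  rw [groupDet, Matrix.det_apply]
  refine Submodule.sum_mem _ fun σ _ => zsmul_mem ?_ _
  have hσ : ∏ q, σ q * q⁻¹ = 1 := by
    rw [Finset.prod_mul_distrib, Finset.prod_inv_distrib, mul_inv_eq_one]
    exact Equiv.prod_comp σ id
  simp only [Matrix.of_apply]
  simpa only [hσ] using prod_mem_gradeBy π Finset.univ (fun q => σ q * q⁻¹) _ fun q _ => hY _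

theorem MonoidHom.sum_apply_eq_ite {A K : Type*} [CommGroup A] [Finite A] [CommRing K]
    [IsDomain K] [HasEnoughRootsOfUnity K (Monoid.exponent A)] [Fintype (A →* Kˣ)] (a : A) :
    ∑ φ : A →* Kˣ, (φ a : K) = if a = 1 then (Nat.card A : K) else 0 := by
  split_ifs with ha
  · simp [ha, ← Nat.card_eq_fintype_card, CommGroup.card_monoidHom_of_hasEnoughRootsOfUnity]
  · obtain ⟨ψ, hψ⟩ := CommGroup.exists_apply_ne_one_of_hasEnoughRootsOfUnity A K ha
    have hshift : (ψ a : K) * ∑ φ : A →* Kˣ, (φ a : K) = ∑ φ : A →* Kˣ, (φ a : K) := by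
      rw [Finset.mul_sum]
      exact Fintype.sum_equiv (Equiv.mulLeft ψ) _ _ fun φ => by simp
    by_contra hS
    exact hψ (Units.val_eq_one.mp ((mul_eq_right₀ hS).mp hshift))

theorem bijOn_domRestrict_of_forall_existsUnique {G K : Type*} [CommGroup G] [Finite G]
    [CommMonoid K] [HasEnoughRootsOfUnity K (Monoid.exponent G)] {H : Subgroup G}
    {X : Finset (G →* Kˣ)}
    (hX : ∀ χ : G →* Kˣ, ∃! ψ : G →* Kˣ, ψ ∈ X ∧ ∀ h ∈ H, (ψ⁻¹ * χ) h = 1) :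
    Set.BijOn (fun χ : G →* Kˣ => χ.domRestrict H) X Set.univ := by
  refine ⟨Set.mapsTo_univ _ _, fun a ha b hb hab => ?_, fun φ _ => ?_⟩
  · have hres : ∀ h ∈ H, a h = b h := fun h hh => DFunLike.congr_fun hab ⟨h, hh⟩
    exact (hX b).unique ⟨ha, fun h hh => by simp [hres h hh]⟩ ⟨hb, fun h hh => by simp⟩
  · obtain ⟨χ, rfl⟩ := MonoidHom.domRestrict_surjective K H φ
    obtain ⟨ψ, ⟨hψX, hψ⟩, -⟩ := hX χ
    refine ⟨ψ, hψX, MonoidHom.ext fun h => ?_⟩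
    simpa [inv_mul_eq_one] using hψ h h.2

theorem sum_apply_eq_ite_of_forall_existsUnique {G K : Type*} [CommGroup G] [Finite G]
    [CommRing K] [IsDomain K] [HasEnoughRootsOfUnity K (Monoid.exponent G)] {H : Subgroup G}
    {X : Finset (G →* Kˣ)}
    (hX : ∀ χ : G →* Kˣ, ∃! ψ : G →* Kˣ, ψ ∈ X ∧ ∀ h ∈ H, (ψ⁻¹ * χ) h = 1)
    {k : G} (hk : k ∈ H) :
    ∑ χ ∈ X, (χ k : K) = if k = 1 then (Nat.card H : K) else 0 := by
  have : HasEnoughRootsOfUnity K (Monoid.exponent H) :=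
    .of_dvd K (Monoid.exponent_submonoid_dvd H.toSubmonoid)
  have : Fintype (H →* Kˣ) := Fintype.ofFinite _
  have hbij := bijOn_domRestrict_of_forall_existsUnique hX
  calc ∑ χ ∈ X, (χ k : K) = ∑ φ : H →* Kˣ, (φ ⟨k, hk⟩ : K) :=
        Finset.sum_nbij _ (fun _ _ => Finset.mem_univ _) hbij.injOn
          (by simpa using hbij.surjOn) fun _ _ => rfl
    _ = _ := by rw [MonoidHom.sum_apply_eq_ite, Subgroup.mk_eq_one]

namespace MonoidAlgebra

variable {G K : Type*} [CommGroup G] [CommRing K] (R : Type*) [CommSemiring R] [Algebra K R]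

noncomputable def evalChar (χ : G →* Kˣ) : MonoidAlgebra R G →ₐ[R] R :=
  lift R R G ((algebraMap K R : K →* R).comp ((Units.coeHom K).comp χ))

variable {R}

theorem evalChar_single (χ : G →* Kˣ) (g : G) (r : R) :
    evalChar R χ (single g r) = (χ g : K) • r := by
  rw [evalChar, lift_single, smul_eq_mul, Algebra.smul_def, mul_comm]
  rfl

theorem evalChar_apply [Fintype G] (χ : G →* Kˣ) (a : MonoidAlgebra R G) :
    evalChar R χ a = ∑ g, (χ g : K) • a.coeff g := by
  rw [evalChar, lift_apply, Finsupp.sum_fintype _ _ (by simp)]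
  refine Finset.sum_congr rfl fun g _ => ?_
  rw [smul_eq_mul, Algebra.smul_def, mul_comm]
  rfl

theorem sum_inv_smul_evalChar [Fintype G] [IsDomain K]
    [HasEnoughRootsOfUnity K (Monoid.exponent G)] {H : Subgroup G} {X : Finset (G →* Kˣ)}
    (hX : ∀ χ : G →* Kˣ, ∃! ψ : G →* Kˣ, ψ ∈ X ∧ ∀ h ∈ H, (ψ⁻¹ * χ) h = 1)
    (a : MonoidAlgebra R G) (ha : ∀ g ∉ H, a.coeff g = 0) {h : G} (hh : h ∈ H) :
    ∑ χ ∈ X, (((χ h)⁻¹ : Kˣ) : K) • evalChar R χ a = (Nat.card H : K) • a.coeff h := by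
  have hsum : ∀ g, (∑ χ ∈ X, ((χ (h⁻¹ * g) : Kˣ) : K)) • a.coeff g
      = if g = h then (Nat.card H : K) • a.coeff h else 0 := by
    intro g
    by_cases hg : g ∈ H
    · rw [sum_apply_eq_ite_of_forall_existsUnique hX (mul_mem (inv_mem hh) hg), inv_mul_eq_one]
      by_cases hgh : g = h
      · simp [hgh]
      · simp [hgh, Ne.symm hgh]
    · rw [ha g hg, smul_zero, if_neg fun hgh : g = h => hg (hgh ▸ hh)]
  calc ∑ χ ∈ X, (((χ h)⁻¹ : Kˣ) : K) • evalChar R χ a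
      = ∑ g, (∑ χ ∈ X, ((χ (h⁻¹ * g) : Kˣ) : K)) • a.coeff g := by
        simp only [evalChar_apply, Finset.smul_sum, Finset.sum_smul, smul_smul]
        rw [Finset.sum_comm]
        simp [map_mul, map_inv]
    _ = (Nat.card H : K) • a.coeff h := by
        rw [Finset.sum_congr rfl fun g _ => hsum g, Finset.sum_ite_eq' Finset.univ h,
          if_pos (Finset.mem_univ h)]

end MonoidAlgebra

/-- For each `h ∈ H`, the coefficient of `h` in the group-algebra element
`Θ_{G/H}(Y)` (where `Y_C = ∑_{g ∈ C} x_g · g ∈ R[G]`, `R = ℂ[x_g : g ∈ G]`) has integer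
coefficients and equals `z_h = (1/|H|) ∑_{χ ∈ X} χ(h)⁻¹ Θ_{G/H}(y^χ)`. -/
theorem coeff_groupDet_quotient {G : Type*} [CommGroup G] [Fintype G]
    (H : Subgroup G) (X : Finset (G →* ℂˣ))
    (hX : ∀ χ : G →* ℂˣ, ∃! ψ : G →* ℂˣ, ψ ∈ X ∧ ∀ h ∈ H, (ψ⁻¹ * χ) h = 1)
    (h : G) (hh : h ∈ H) :
    (∃ q : MvPolynomial G ℤ,
      (groupDet (G ⧸ H) (fun C : G ⧸ H =>
          (∑ g ∈ Finset.univ.filter (fun g : G => (QuotientGroup.mk g : G ⧸ H) = C),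
            MonoidAlgebra.single g (MvPolynomial.X g) :
          MonoidAlgebra (MvPolynomial G ℂ) G))).coeff h
        = MvPolynomial.map (Int.castRingHom ℂ) q) ∧
    (groupDet (G ⧸ H) (fun C : G ⧸ H =>
        (∑ g ∈ Finset.univ.filter (fun g : G => (QuotientGroup.mk g : G ⧸ H) = C),
          MonoidAlgebra.single g (MvPolynomial.X g) :
        MonoidAlgebra (MvPolynomial G ℂ) G))).coeff h
      = MvPolynomial.C ((Nat.card H : ℂ)⁻¹) *
          ∑ χ ∈ X, MvPolynomial.C (((χ h)⁻¹ : ℂˣ) : ℂ) *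
            groupDet (G ⧸ H) (fun C : G ⧸ H =>
              ∑ g ∈ Finset.univ.filter (fun g : G => (QuotientGroup.mk g : G ⧸ H) = C),
                MvPolynomial.C (χ g : ℂ) * MvPolynomial.X g) := by
  set Θ := groupDet (G ⧸ H) (fun C : G ⧸ H =>
    (∑ g ∈ Finset.univ.filter (fun g : G => (QuotientGroup.mk g : G ⧸ H) = C),
      MonoidAlgebra.single g (MvPolynomial.X g) : MonoidAlgebra (MvPolynomial G ℂ) G)) with hΘ
  have hΘH : Θ ∈ MonoidAlgebra.gradeBy _ (QuotientGroup.mk' H) 1 :=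
    groupDet_mem_gradeBy_one _ _ fun C => Submodule.sum_mem _ fun g hg =>
      (Finset.mem_filter.mp hg).2 ▸ MonoidAlgebra.single_mem_gradeBy _ g _
  refine ⟨⟨(groupDet (G ⧸ H) fun C : G ⧸ H =>
    (∑ g ∈ Finset.univ.filter (fun g : G => (QuotientGroup.mk g : G ⧸ H) = C),
      MonoidAlgebra.single g (MvPolynomial.X g) : MonoidAlgebra (MvPolynomial G ℤ) G)).coeff h,
    ?_⟩, ?_⟩
  · rw [← MonoidAlgebra.coeff_mapRingHom, RingHom.map_groupDet]
    simp [Function.comp_def, map_sum, Θ]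
  · have : NeZero (Monoid.exponent G) := ⟨Monoid.exponent_ne_zero_of_finite⟩
    have hev : ∀ χ : G →* ℂˣ, groupDet (G ⧸ H) (fun C : G ⧸ H =>
        ∑ g ∈ Finset.univ.filter (fun g : G => (QuotientGroup.mk g : G ⧸ H) = C),
          MvPolynomial.C (χ g : ℂ) * MvPolynomial.X g) = MonoidAlgebra.evalChar _ χ Θ := by
      intro χ
      rw [hΘ, ← AlgHom.coe_toRingHom, RingHom.map_groupDet]
      simp [Function.comp_def, MonoidAlgebra.evalChar_single, MvPolynomial.C_mul']
    have hsupp : ∀ g ∉ H, Θ.coeff g = 0 := fun g hg =>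
      MonoidAlgebra.coeff_eq_zero_of_mem_gradeBy hΘH (by simpa using hg)
    have hcard : (Nat.card H : ℂ) ≠ 0 := Nat.cast_ne_zero.mpr Nat.card_pos.ne'
    simp_rw [hev, MvPolynomial.C_mul']
    rw [MonoidAlgebra.sum_inv_smul_evalChar hX Θ hsupp hh, smul_smul, inv_mul_cancel₀ hcard,
      one_smul]
end

section
/- Let $G$ be a finite abelian group, let $H$ be a subgroup of $G$, let $\widehat{G}$ denote the group of characters of $G$ with values in $\mathbb{C}^\times$, and let $\widehat{G}_H := \{\chi \in \widehat{G} \mid \chi(h) = 1 \text{ for all } h \in H\}$. Work in the group algebra $R[G]$ where $R = \mathbb{C}[x_g : g \in G]$ is the multivariate polynomial ring. Then the element $\prod_{\chi \in \widehat{G}_H} \Big( \sum_{g \in G} \chi(g)\, x_g \cdot g \Big) \in R[G]$ is supported on $H$, i.e., it equals $\sum_{h \in H} A_h \cdot h$ for polynomials $A_h \in R$, and each $A_h$ is a homogeneous polynomial of degree $|G/H| = [G:H]$. -/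
/-!
For a character `ψ`, the twist `g ↦ ψ(g) g` extends to an `R`-algebra automorphism of `R[G]`,
sending the factor of `χ` to the factor of `ψ χ`. When `ψ ∈ Ĝ_H` this permutes the factors,
so it fixes the product `P` and hence `ψ g • P_g = P_g`; as the characters trivial on `H` separate
the points of `G ⧸ H`, `P_g = 0` for `g ∉ H`. Each factor has coefficients homogeneous of degree
one, so the coefficients of `P` are homogeneous of degree `|Ĝ_H| = [G : H]`.
-/

open MonoidAlgebra

namespace MonoidAlgebra

section Twist

variable {K R M : Type*} [CommSemiring K] [CommSemiring R] [Algebra K R] [Monoid M]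

noncomputable def twist (ψ : M →* Kˣ) : R[M] →ₐ[R] R[M] :=
  lift R R[M] M
    { toFun m := single m (algebraMap K R (ψ m))
      map_one' := by simp [one_def]
      map_mul' m m' := by simp [single_mul_single] }

theorem twist_single (ψ : M →* Kˣ) (m : M) (r : R) :
    twist ψ (single m r) = single m ((ψ m : K) • r) := by
  simp [twist, Algebra.smul_def, mul_comm]

theorem coeff_twist (ψ : M →* Kˣ) (x : R[M]) (m : M) :
    (twist ψ x).coeff m = (ψ m : K) • x.coeff m := by
  induction x using induction_linear with
  | zero => simp
  | add x y hx hy => simp [hx, hy, smul_add]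
  | single m' r =>
    classical
    rw [twist_single, coeff_single, coeff_single, Finsupp.single_apply, Finsupp.single_apply]
    split_ifs with h <;> simp [h]

end Twist

theorem coeff_eq_zero_of_twist_eq_self {K R M : Type*} [Field K] [CommRing R] [Algebra K R]
    [Monoid M] {ψ : M →* Kˣ} {x : R[M]} (hx : twist ψ x = x) {m : M} (hm : ψ m ≠ 1) :
    x.coeff m = 0 := by
  have h : ((ψ m : K) - 1) • x.coeff m = 0 := by
    rw [sub_smul, one_smul, ← coeff_twist, hx, sub_self]
  exact (smul_eq_zero.mp h).resolve_left (sub_ne_zero.mpr (Units.val_eq_one.not.mpr hm))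

section CharSum

variable {K R G : Type*} [CommSemiring K] [CommSemiring R] [Algebra K R] [CommMonoid G]
  [Fintype G]

noncomputable def charSum (a : G → R) (χ : G →* Kˣ) : R[G] :=
  ∑ g, single g ((χ g : K) • a g)

theorem twist_charSum (ψ χ : G →* Kˣ) (a : G → R) :
    twist ψ (charSum a χ) = charSum a (ψ * χ) := by
  simp [charSum, twist_single, mul_smul]

theorem twist_prod_charSum {ψ : G →* Kˣ} {S : Finset (G →* Kˣ)} (hS : ∀ χ, ψ * χ ∈ S ↔ χ ∈ S)
    (a : G → R) : twist ψ (∏ χ ∈ S, charSum a χ) = ∏ χ ∈ S, charSum a χ := by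
  rw [map_prod]
  exact Finset.prod_equiv (Equiv.mulLeft ψ) (fun χ => (hS χ).symm) fun χ _ => twist_charSum ψ χ a

end CharSum

section HomogeneousCoeffs

variable {σ R M : Type*} [CommSemiring R]

def HasHomogeneousCoeffs (x : (MvPolynomial σ R)[M]) (n : ℕ) : Prop :=
  ∀ m, (x.coeff m).IsHomogeneous n

theorem hasHomogeneousCoeffs_single {p : MvPolynomial σ R} {n : ℕ} (hp : p.IsHomogeneous n)
    (m : M) : HasHomogeneousCoeffs (single m p) n := fun m' => by
  classical
  rw [coeff_single, Finsupp.single_apply]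
  split_ifs
  exacts [hp, MvPolynomial.isHomogeneous_zero _ _ _]

theorem HasHomogeneousCoeffs.sum {ι : Type*} (s : Finset ι) (x : ι → (MvPolynomial σ R)[M])
    {n : ℕ} (h : ∀ i ∈ s, HasHomogeneousCoeffs (x i) n) :
    HasHomogeneousCoeffs (∑ i ∈ s, x i) n := fun m => by
  rw [coeff_sum, Finsupp.finsetSum_apply]
  exact MvPolynomial.IsHomogeneous.sum s _ n fun i hi => h i hi m

theorem HasHomogeneousCoeffs.mul [Monoid M] {x y : (MvPolynomial σ R)[M]} {k n : ℕ}
    (hx : HasHomogeneousCoeffs x k) (hy : HasHomogeneousCoeffs y n) :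
    HasHomogeneousCoeffs (x * y) (k + n) := fun m => by
  classical
  rw [coeff_mul]
  refine MvPolynomial.IsHomogeneous.sum _ _ _ fun m₁ _ => ?_
  refine MvPolynomial.IsHomogeneous.sum _ _ _ fun m₂ _ => ?_
  dsimp only
  split_ifs
  exacts [(hx m₁).mul (hy m₂), MvPolynomial.isHomogeneous_zero _ _ _]

theorem hasHomogeneousCoeffs_one [Monoid M] :
    HasHomogeneousCoeffs (1 : (MvPolynomial σ R)[M]) 0 :=
  hasHomogeneousCoeffs_single (MvPolynomial.isHomogeneous_one σ R) 1

theorem HasHomogeneousCoeffs.prod {M : Type*} [CommMonoid M] {ι : Type*} (s : Finset ι)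
    (x : ι → (MvPolynomial σ R)[M]) (n : ι → ℕ) (h : ∀ i ∈ s, HasHomogeneousCoeffs (x i) (n i)) :
    HasHomogeneousCoeffs (∏ i ∈ s, x i) (∑ i ∈ s, n i) := by
  induction s using Finset.cons_induction with
  | empty => simpa using hasHomogeneousCoeffs_one
  | cons i s hi ih =>
    rw [Finset.prod_cons, Finset.sum_cons]
    exact (h i (Finset.mem_cons_self i s)).mul (ih fun j hj => h j (Finset.mem_cons_of_mem hj))

end HomogeneousCoeffs

theorem hasHomogeneousCoeffs_charSum_X {K G : Type*} [CommSemiring K] [CommMonoid G] [Fintype G]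
    (χ : G →* Kˣ) : HasHomogeneousCoeffs (charSum MvPolynomial.X χ : (MvPolynomial G K)[G]) 1 :=
  HasHomogeneousCoeffs.sum _ _ fun g _ => hasHomogeneousCoeffs_single
    (by rw [← MvPolynomial.C_mul']; exact MvPolynomial.isHomogeneous_C_mul_X _ g) g

end MonoidAlgebra

theorem card_eq_index_of_mem_iff_forall_eq_one {G M : Type*} [CommGroup G] [Finite G]
    [CommMonoid M] [HasEnoughRootsOfUnity M (Monoid.exponent G)] (H : Subgroup G)
    (S : Finset (G →* Mˣ))
    (hS : ∀ χ : G →* Mˣ, χ ∈ S ↔ ∀ h ∈ H, χ h = 1) : S.card = H.index := by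
  rw [Subgroup.index, ← CommGroup.card_domRestrictHom_ker M H, ← Nat.card_eq_finsetCard]
  exact Nat.card_congr (Equiv.subtypeEquivRight fun χ => by
    simp [hS, MonoidHom.mem_ker])

/-- Over `R = ℂ[x_g : g ∈ G]`, the group-algebra element
`∏_{χ ∈ Ĝ_H} (∑_{g ∈ G} χ(g) x_g · g)` is supported on `H`, and its coefficient at each
`h ∈ H` is homogeneous of degree `[G : H] = |G/H|`. -/
theorem prod_char_sum_supported_on_subgroup {G : Type*} [CommGroup G] [Fintype G]
    (H : Subgroup G) (S : Finset (G →* ℂˣ))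
    (hS : ∀ χ : G →* ℂˣ, χ ∈ S ↔ ∀ h ∈ H, χ h = 1) :
    (∀ g : G, g ∉ H →
      (∏ χ ∈ S, ∑ g' : G,
        (MonoidAlgebra.single g' (MvPolynomial.C (χ g' : ℂ) * MvPolynomial.X g') :
          MonoidAlgebra (MvPolynomial G ℂ) G)).coeff g = 0) ∧
    (∀ h ∈ H,
      ((∏ χ ∈ S, ∑ g' : G,
        (MonoidAlgebra.single g' (MvPolynomial.C (χ g' : ℂ) * MvPolynomial.X g') :
          MonoidAlgebra (MvPolynomial G ℂ) G)).coeff h).IsHomogeneous H.index) := by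
  have hprod : (∏ χ ∈ S, ∑ g' : G,
      (single g' (MvPolynomial.C (χ g' : ℂ) * MvPolynomial.X g') : (MvPolynomial G ℂ)[G])) =
      ∏ χ ∈ S, charSum MvPolynomial.X χ := by
    simp only [charSum, MvPolynomial.C_mul']
  rw [hprod]
  refine ⟨fun g hg => ?_, fun h _ => ?_⟩
  · obtain ⟨ψ, hψ, hψg⟩ : ∃ ψ ∈ S, ψ g ≠ 1 := by
      by_contra! h
      exact hg <| (CommGroup.forall_monoidHom_apply_eq_one_iff ℂ H g).mp
        fun ψ hψ => h ψ ((hS ψ).mpr hψ)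
    refine coeff_eq_zero_of_twist_eq_self (twist_prod_charSum (fun χ => ?_) _) hψg
    simp only [hS, MonoidHom.mul_apply]
    exact forall₂_congr fun h hh => by rw [(hS ψ).mp hψ h hh, one_mul]
  · rw [← card_eq_index_of_mem_iff_forall_eq_one H S hS]
    simpa using HasHomogeneousCoeffs.prod S _ (fun _ => 1)
      (fun χ _ => hasHomogeneousCoeffs_charSum_X χ) h
end

section
/- Let $G$ be a finite abelian group and let $H$ be a subgroup of $G$. Then $S(G) \subseteq S(H)$, where $S(G) := \{\Theta_G(x) \mid x : G \to \mathbb{Z}\}$ is the set of integer group determinants of $G$. -/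
open scoped Classical

/-!
Listing `G` coset by coset, `G ≃ (G ⧸ H) × H`, cuts the group matrix of `x` into blocks, each of
which is the matrix of left multiplication on `R[H]` by an element of `R[H]`. When `H` is abelian
these blocks commute, so by Silvester's theorem (`Matrix.det_det`) the determinant can be taken
first over `R[H]` and then over `R`; the result is the group determinant of `H` at the
coefficients of the `R[H]`-determinant.
-/

open Matrix

section GroupRing

variable {R : Type*} [CommRing R]

theorem MonoidAlgebra.leftMulMatrix_basis_apply {G : Type*} [Group G] [Fintype G]
    [DecidableEq G] (a : MonoidAlgebra R G) (g h : G) :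
    Algebra.leftMulMatrix (MonoidAlgebra.basis G R) a g h = a.coeff (g * h⁻¹) := by
  rw [Algebra.leftMulMatrix_eq_repr_mul]
  show (a * MonoidAlgebra.single h (1 : R)).coeff g = _
  rw [MonoidAlgebra.coeff_mul_single_apply, mul_one]

theorem groupDet_coeff_eq_det_leftMulMatrix {G : Type*} [Group G] [Fintype G] [DecidableEq G]
    (a : MonoidAlgebra R G) :
    groupDet G a.coeff = (Algebra.leftMulMatrix (MonoidAlgebra.basis G R) a).det := by
  rw [groupDet]
  congr 1
  ext g h
  rw [MonoidAlgebra.leftMulMatrix_basis_apply]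
  rfl

end GroupRing

namespace Subgroup

variable {G : Type*} [Group G] (H : Subgroup G)

noncomputable def quotientProdEquiv : (G ⧸ H) × H ≃ G where
  toFun p := p.1.out * p.2
  invFun g := (g, ⟨(g : G ⧸ H).out⁻¹ * g, QuotientGroup.eq.mp (QuotientGroup.out_eq' _)⟩)
  left_inv := by
    rintro ⟨q, h⟩
    have hq : ((q.out * h : G) : G ⧸ H) = q := by
      rw [QuotientGroup.mk_mul_of_mem _ h.2, QuotientGroup.out_eq']
    ext
    · exact hq
    · simp [hq]
  right_inv g := mul_inv_cancel_left _ g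

theorem quotientProdEquiv_apply (q : G ⧸ H) (h : H) :
    H.quotientProdEquiv (q, h) = q.out * h :=
  rfl

end Subgroup

section CosetBlocks

open scoped IsMulCommutative

variable {R : Type*} [CommRing R] {G : Type*} [Group G] [Fintype G] (H : Subgroup G)

noncomputable def cosetBlockMatrix (x : G → R) : Matrix (G ⧸ H) (G ⧸ H) (MonoidAlgebra R H) :=
  of fun q q' => .ofCoeff <| Finsupp.equivFunOnFinite.symm fun h : H => x (q.out * h * q'.out⁻¹)

theorem comp_map_cosetBlockMatrix (x : G → R) :
    comp _ _ _ _ R ((cosetBlockMatrix H x).map (Algebra.leftMulMatrix (MonoidAlgebra.basis H R))) =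
      (of fun g h : G => x (g * h⁻¹)).submatrix H.quotientProdEquiv H.quotientProdEquiv := by
  ext ⟨q, h⟩ ⟨q', h'⟩
  simp only [comp_apply, map_apply, MonoidAlgebra.leftMulMatrix_basis_apply, submatrix_apply,
    of_apply, Subgroup.quotientProdEquiv_apply, cosetBlockMatrix]
  simp [_root_.mul_inv_rev, mul_assoc]

theorem groupDet_eq_groupDet_coeff_det_cosetBlockMatrix [IsMulCommutative H] (x : G → R) :
    groupDet G x = groupDet H (cosetBlockMatrix H x).det.coeff := by
  rw [groupDet_coeff_eq_det_leftMulMatrix, ← AlgHom.coe_toRingHom, det_det,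
    AlgHom.coe_toRingHom, comp_map_cosetBlockMatrix, det_submatrix_equiv_self, groupDet]

end CosetBlocks

/-- For a finite abelian group `G` and a subgroup `H`, `S(G) ⊆ S(H)`. -/
theorem integerGroupDet_subset_of_subgroup {G : Type*} [CommGroup G] [Fintype G]
    (H : Subgroup G) :
    {z : ℤ | ∃ x : G → ℤ, groupDet G x = z} ⊆
      {z : ℤ | ∃ x : H → ℤ, groupDet H x = z} := by
  rintro _ ⟨x, rfl⟩
  exact ⟨_, (groupDet_eq_groupDet_coeff_det_cosetBlockMatrix H x).symm⟩
end

section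
/- Let $G$ be a finite group and let $H$ be an abelian subgroup of $G$. Then $\{\alpha^{[G:H]} \mid \alpha \in S(H)\} \subseteq S(G) \subseteq S(H)$, where $[G:H]$ denotes the index of $H$ in $G$. -/
/-!
Split `G` along a transversal of `H`, so that the group matrix of `G` becomes an
`[G:H] × [G:H]` block matrix with `H × H` blocks.

If `x` vanishes off `H`, the block matrix taken along right cosets is block diagonal, each
diagonal block being the group matrix of `x|_H`; this gives `Θ_H(x|_H)^[G:H] ∈ S(G)`.

Along left cosets every block is the regular representation of an element of the group ring
`ℤ[H]`, which is commutative because `H` is abelian. Determinants of block matrices with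
commuting blocks may be taken in two steps (`Matrix.det_det`), so `Θ_G(x)` is the norm of
a determinant computed in `ℤ[H]`, i.e. a group determinant of `H`.
-/

open scoped Classical

open Matrix

theorem Subgroup.IsComplement.mul_inv_mem_iff {G : Type*} [Group G] {H : Subgroup G} {T : Set G}
    (hT : IsComplement H T) {t t' : G} (ht : t ∈ T) (ht' : t' ∈ T) : t * t'⁻¹ ∈ H ↔ t = t' := by
  rw [← rightCoset_eq_iff]
  change RightCosetEquivalence _ _ _ ↔ _
  rw [← hT.equiv_snd_eq_iff_rightCosetEquivalence,
    hT.equiv_snd_eq_self_of_mem_of_one_mem H.one_mem ht,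
    hT.equiv_snd_eq_self_of_mem_of_one_mem H.one_mem ht', Subtype.mk.injEq, eq_comm]

section

variable {G R : Type*} [Group G] [Fintype G] [CommRing R]

theorem groupDet_extend_eq_pow_index (H : Subgroup G) (x : H → R) :
    groupDet G (Function.extend (↑) x (0 : G → R)) = groupDet H x ^ H.index := by
  obtain ⟨T, hT, -⟩ := H.exists_isComplement_right 1
  have hblock : (of fun g h : G => Function.extend (↑) x (0 : G → R) (g * h⁻¹)).submatrix
      hT.equiv.symm hT.equiv.symm = blockDiagonal fun _ : T => of fun a b : H => x (a * b⁻¹) := by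
    ext ⟨a, t⟩ ⟨b, t'⟩
    simp only [submatrix_apply, of_apply, hT.equiv_symm_apply]
    have hmem : (a : G) * t * ((b : G) * t')⁻¹ ∈ H ↔ t = t' := by
      rw [_root_.mul_inv_rev, ← mul_assoc, H.mul_mem_cancel_right (H.inv_mem b.2), mul_assoc,
        H.mul_mem_cancel_left a.2, hT.mul_inv_mem_iff t.2 t'.2, Subtype.coe_inj]
    by_cases htt' : t = t'
    · subst htt'
      rw [blockDiagonal_apply_eq, of_apply, _root_.mul_inv_rev, mul_assoc, mul_inv_cancel_left,
        ← Subgroup.coe_inv, ← Subgroup.coe_mul]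
      exact Subtype.val_injective.extend_apply x 0 (a * b⁻¹)
    · rw [blockDiagonal_apply_ne _ _ _ htt']
      refine Function.extend_apply' _ _ _ ?_
      rintro ⟨c, hc⟩
      exact htt' (hmem.mp (hc ▸ c.2))
  rw [groupDet, ← det_submatrix_equiv_self hT.equiv.symm, hblock, det_blockDiagonal,
    Finset.prod_const, Finset.card_univ, ← Nat.card_eq_fintype_card, hT.card_right, groupDet]
  -- the two sides differ only in the `Fintype` instance on `H`, viewed as a set or a subgroup
  convert rfl

theorem groupDet_coeff_eq_norm {K : Type*} [Group K] [Fintype K] (z : MonoidAlgebra R K) :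
    groupDet K z.coeff = Algebra.norm R z := by
  rw [Algebra.norm_eq_matrix_det (MonoidAlgebra.basis K R), groupDet]
  congr 1
  ext a b
  rw [Algebra.leftMulMatrix_eq_repr_mul]
  show _ = (z * MonoidAlgebra.single b 1).coeff a
  simp

theorem exists_groupDet_eq_of_isMulCommutative (H : Subgroup G) [IsMulCommutative H]
    (x : G → R) : ∃ y : H → R, groupDet H y = groupDet G x := by
  let _ : CommGroup H := { mul_comm := mul_comm' }
  obtain ⟨S, hS, -⟩ := H.exists_isComplement_left 1
  let b := MonoidAlgebra.basis H R
  let M : Matrix S S (MonoidAlgebra R H) := of fun s s' =>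
    MonoidAlgebra.ofCoeff (Finsupp.equivFunOnFinite.symm fun k : H => x (s * k * (s' : G)⁻¹))
  refine ⟨M.det.coeff, ?_⟩
  have hblock : (of fun g h : G => x (g * h⁻¹)).submatrix hS.equiv.symm hS.equiv.symm =
      comp S S H H R (M.map (Algebra.leftMulMatrix b)) := by
    ext ⟨s, a⟩ ⟨s', a'⟩
    rw [submatrix_apply, of_apply, hS.equiv_symm_apply, hS.equiv_symm_apply, comp_apply,
      map_apply, Algebra.leftMulMatrix_eq_repr_mul]
    show _ = (M s s' * MonoidAlgebra.single a' 1).coeff a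
    simp only [M, of_apply, MonoidAlgebra.coeff_mul_single_apply, mul_one,
      Finsupp.equivFunOnFinite_symm_apply_apply, Subgroup.coe_mul, InvMemClass.coe_inv]
    group
  rw [groupDet_coeff_eq_norm, Algebra.norm_eq_matrix_det b, groupDet,
    ← det_submatrix_equiv_self hS.equiv.symm, hblock]
  exact det_det M (Algebra.leftMulMatrix b).toRingHom

end

/-- For a finite group `G` and an abelian subgroup `H`,
`{α^[G:H] | α ∈ S(H)} ⊆ S(G) ⊆ S(H)`. -/
theorem pow_index_integerGroupDet_subset {G : Type*} [Group G] [Fintype G]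
    (H : Subgroup G) (hH : ∀ a b : G, a ∈ H → b ∈ H → a * b = b * a) :
    {z : ℤ | ∃ α : ℤ, (∃ x : H → ℤ, groupDet H x = α) ∧ z = α ^ H.index} ⊆
        {z : ℤ | ∃ x : G → ℤ, groupDet G x = z} ∧
      {z : ℤ | ∃ x : G → ℤ, groupDet G x = z} ⊆
        {z : ℤ | ∃ x : H → ℤ, groupDet H x = z} := by
  have : IsMulCommutative H := .of_comm fun a b => Subtype.ext (hH a b a.2 b.2)
  refine ⟨?_, ?_⟩
  · rintro _ ⟨_, ⟨x, rfl⟩, rfl⟩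
    exact ⟨_, groupDet_extend_eq_pow_index H x⟩
  · rintro _ ⟨x, rfl⟩
    exact exists_groupDet_eq_of_isMulCommutative H x
end

section
/- Let $\zeta_8 \in \mathbb{C}$ be a primitive $8$th root of unity. Then for all $x_0, x_1, x_2, x_3 \in \mathbb{C}$, $D_4(x_0, \zeta_8 x_1, \zeta_8^2 x_2, \zeta_8^3 x_3) = (x_0^2 - x_2^2 + 2 x_1 x_3)^2 + (x_1^2 - x_3^2 - 2 x_0 x_2)^2$. -/
/-!
Over any commutative ring the `C₄` group determinant factors as
`((x₀ + x₂)² - (x₁ + x₃)²) * ((x₀ - x₂)² + (x₁ - x₃)²)`. After the twist `x_k ↦ ζ^k x_k`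
with `ζ⁴ = -1`, the square root of `-1` given by `i = ζ²` turns the two factors into the
conjugate pair `A - i B` and `A + i B`, where `A = x₀² - x₂² + 2x₁x₃` and
`B = x₁² - x₃² - 2x₀x₂`; their product is `A² + B²`.
-/

/-- The group determinant of `C₄`: the determinant of the `4 × 4` circulant matrix whose
`(i, j)` entry is `x_{(i - j) mod 4}`. -/
def D4 {R : Type*} [CommRing R] (x0 x1 x2 x3 : R) : R :=
  Matrix.det !![x0, x3, x2, x1; x1, x0, x3, x2; x2, x1, x0, x3; x3, x2, x1, x0]

theorem D4_eq_mul {R : Type*} [CommRing R] (x0 x1 x2 x3 : R) :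
    D4 x0 x1 x2 x3 = ((x0 + x2) ^ 2 - (x1 + x3) ^ 2) * ((x0 - x2) ^ 2 + (x1 - x3) ^ 2) := by
  rw [D4, Matrix.det_succ_row_zero]
  simp [Fin.sum_univ_succ, Matrix.det_fin_three, Fin.succAbove, Matrix.submatrix]
  ring

theorem D4_twist_of_pow_four_eq_neg_one {R : Type*} [CommRing R] {ζ : R} (hζ : ζ ^ 4 = -1)
    (x0 x1 x2 x3 : R) :
    D4 x0 (ζ * x1) (ζ ^ 2 * x2) (ζ ^ 3 * x3) =
      (x0 ^ 2 - x2 ^ 2 + 2 * x1 * x3) ^ 2 + (x1 ^ 2 - x3 ^ 2 - 2 * x0 * x2) ^ 2 := by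
  set A := x0 ^ 2 - x2 ^ 2 + 2 * x1 * x3
  set B := x1 ^ 2 - x3 ^ 2 - 2 * x0 * x2
  have h_sub : (x0 + ζ ^ 2 * x2) ^ 2 - (ζ * x1 + ζ ^ 3 * x3) ^ 2 = A - ζ ^ 2 * B := by
    linear_combination (x2 ^ 2 - 2 * x1 * x3 - ζ ^ 2 * x3 ^ 2) * hζ
  have h_add : (x0 - ζ ^ 2 * x2) ^ 2 + (ζ * x1 - ζ ^ 3 * x3) ^ 2 = A + ζ ^ 2 * B := by
    linear_combination (x2 ^ 2 - 2 * x1 * x3 + ζ ^ 2 * x3 ^ 2) * hζ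
  rw [D4_eq_mul, h_sub, h_add]
  linear_combination (-B ^ 2) * hζ

/-- the twisted `C₄` group determinant as a sum of two squares. -/
theorem D4_zeta8_eq (ζ : ℂ) (hζ : IsPrimitiveRoot ζ 8) (x0 x1 x2 x3 : ℂ) :
    D4 x0 (ζ * x1) (ζ ^ 2 * x2) (ζ ^ 3 * x3) =
      (x0 ^ 2 - x2 ^ 2 + 2 * x1 * x3) ^ 2 + (x1 ^ 2 - x3 ^ 2 - 2 * x0 * x2) ^ 2 :=
  D4_twist_of_pow_four_eq_neg_one
    (hζ.pow_of_dvd (p := 4) (by norm_num) (by norm_num)).eq_neg_one_of_two_right _ _ _ _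
end

section
/- For all integers $b_0, b_1, b_2, b_3, c_0, c_1, c_2, c_3, d_0, d_1, d_2, d_3, e_0, e_1, e_2, e_3$, the following three equalities hold: $D_4(b_0,b_1,b_2,b_3)\widetilde{D}_4(c_0,c_1,c_2,c_3)D_4(d_0,d_1,d_2,d_3)\widetilde{D}_4(e_0,e_1,e_2,e_3) = D_4(b_1,b_2,b_3,b_0)\widetilde{D}_4(c_1,c_2,c_3,-c_0)D_4(d_1,d_2,d_3,d_0)\widetilde{D}_4(e_1,e_2,e_3,-e_0) = D_4(b_2,b_3,b_0,b_1)\widetilde{D}_4(c_2,c_3,-c_0,-c_1)D_4(d_2,d_3,d_0,d_1)\widetilde{D}_4(e_2,e_3,-e_0,-e_1) = D_4(b_3,b_0,b_1,b_2)\widetilde{D}_4(c_3,-c_0,-c_1,-c_2)D_4(d_3,d_0,d_1,d_2)\widetilde{D}_4(e_3,-e_0,-e_1,-e_2)$. -/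
/-- `D̃₄`. -/
def D4t {R : Type*} [CommRing R] (x0 x1 x2 x3 : R) : R :=
  (x0 ^ 2 - x2 ^ 2 + 2 * x1 * x3) ^ 2 + (x1 ^ 2 - x3 ^ 2 - 2 * x0 * x2) ^ 2

/-!
Rotating the arguments of `D4` permutes the columns of the circulant matrix by a 4-cycle, an odd
permutation, so it changes the sign of `D4`. The negacyclic rotation
`(x0, x1, x2, x3) ↦ (x1, x2, x3, -x0)` swaps the two squared terms of `D4t` up to sign, so it leaves
`D4t` unchanged. Hence one simultaneous rotation leaves the product `D4 · D4t · D4 · D4t` invariant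
(the two sign changes cancel), and the three identities are its first three iterates.
-/

section

variable {R : Type*} [CommRing R]

theorem D4_rotate (x0 x1 x2 x3 : R) : D4 x1 x2 x3 x0 = -D4 x0 x1 x2 x3 := by
  simp [D4, Matrix.det_succ_row_zero, Fin.sum_univ_succ, Fin.succAbove]
  ring

theorem D4t_negRotate (x0 x1 x2 x3 : R) : D4t x1 x2 x3 (-x0) = D4t x0 x1 x2 x3 := by
  unfold D4t
  ring

theorem D4_mul_D4t_mul_D4_mul_D4t_rotate (b0 b1 b2 b3 c0 c1 c2 c3 d0 d1 d2 d3 e0 e1 e2 e3 : R) :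
    D4 b1 b2 b3 b0 * D4t c1 c2 c3 (-c0) * D4 d1 d2 d3 d0 * D4t e1 e2 e3 (-e0) =
      D4 b0 b1 b2 b3 * D4t c0 c1 c2 c3 * D4 d0 d1 d2 d3 * D4t e0 e1 e2 e3 := by
  rw [D4_rotate b0, D4_rotate d0, D4t_negRotate c0, D4t_negRotate e0]
  ring

end

/-- cyclic-shift invariance of the product `D₄(b) D̃₄(c) D₄(d) D̃₄(e)`. -/
theorem D4_D4t_prod_shift (b0 b1 b2 b3 c0 c1 c2 c3 d0 d1 d2 d3 e0 e1 e2 e3 : ℤ) :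
    (D4 b0 b1 b2 b3 * D4t c0 c1 c2 c3 * D4 d0 d1 d2 d3 * D4t e0 e1 e2 e3 =
      D4 b1 b2 b3 b0 * D4t c1 c2 c3 (-c0) * D4 d1 d2 d3 d0 * D4t e1 e2 e3 (-e0)) ∧
    (D4 b0 b1 b2 b3 * D4t c0 c1 c2 c3 * D4 d0 d1 d2 d3 * D4t e0 e1 e2 e3 =
      D4 b2 b3 b0 b1 * D4t c2 c3 (-c0) (-c1) * D4 d2 d3 d0 d1 * D4t e2 e3 (-e0) (-e1)) ∧
    (D4 b0 b1 b2 b3 * D4t c0 c1 c2 c3 * D4 d0 d1 d2 d3 * D4t e0 e1 e2 e3 =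
      D4 b3 b0 b1 b2 * D4t c3 (-c0) (-c1) (-c2) * D4 d3 d0 d1 d2 *
        D4t e3 (-e0) (-e1) (-e2)) := by
  have once := D4_mul_D4t_mul_D4_mul_D4t_rotate b0 b1 b2 b3 c0 c1 c2 c3 d0 d1 d2 d3 e0 e1 e2 e3
  have twice := D4_mul_D4t_mul_D4_mul_D4t_rotate
    b1 b2 b3 b0 c1 c2 c3 (-c0) d1 d2 d3 d0 e1 e2 e3 (-e0)
  have thrice := D4_mul_D4t_mul_D4_mul_D4t_rotate
    b2 b3 b0 b1 c2 c3 (-c0) (-c1) d2 d3 d0 d1 e2 e3 (-e0) (-e1)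
  exact ⟨once.symm, (twice.trans once).symm, (thrice.trans (twice.trans once)).symm⟩
end

section
/- For all integers $k, l, m, n$: (1) $D_4(2k+1, 2l, 2m, 2n) \equiv 8m + 1 \pmod{16}$; (2) $\widetilde{D}_4(2k+1, 2l, 2m, 2n) \equiv 8m + 1 \pmod{16}$. -/
theorem D4_two_mul {R : Type*} [CommRing R] (x l m n : R) :
    D4 x (2 * l) (2 * m) (2 * n) = x ^ 4 - 8 * x ^ 2 * m ^ 2 +
      16 * (x ^ 2 * m ^ 2 + m ^ 4 - (x ^ 2 + 4 * m ^ 2) * l * n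
        + (x * m - (l + n) ^ 2) * ((l - n) ^ 2 - x * m)) := by
  rw [D4_eq_mul]
  ring

theorem D4t_two_mul {R : Type*} [CommRing R] (x l m n : R) :
    D4t x (2 * l) (2 * m) (2 * n) = x ^ 4 - 8 * x ^ 2 * m ^ 2 +
      16 * ((2 * l * n - m ^ 2) ^ 2 + x ^ 2 * l * n + (l ^ 2 - n ^ 2 - x * m) ^ 2) := by
  rw [D4t]
  ring

theorem Int.pow_four_sub_modEq_of_odd {x : ℤ} (hx : Odd x) (m : ℤ) :
    x ^ 4 - 8 * x ^ 2 * m ^ 2 ≡ 8 * m + 1 [ZMOD 16] := by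
  obtain ⟨k, rfl⟩ := hx
  obtain ⟨a, ha⟩ := Int.even_mul_succ_self k
  obtain ⟨b, hb⟩ := Int.even_mul_succ_self m
  refine Int.modEq_iff_dvd.mpr ⟨b - a - k ^ 2 * (k + 1) ^ 2 + 2 * k * (k + 1) * m ^ 2, ?_⟩
  linear_combination 8 * hb - 8 * ha

/-- `D₄(2k+1, 2l, 2m, 2n) ≡ D̃₄(2k+1, 2l, 2m, 2n) ≡ 8m + 1 (mod 16)`. -/
theorem D4_D4t_odd_first_mod_sixteen (k l m n : ℤ) :
    (D4 (2 * k + 1) (2 * l) (2 * m) (2 * n) ≡ 8 * m + 1 [ZMOD 16]) ∧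
    (D4t (2 * k + 1) (2 * l) (2 * m) (2 * n) ≡ 8 * m + 1 [ZMOD 16]) := by
  have hx : Odd (2 * k + 1) := odd_two_mul_add_one k
  constructor
  · rw [D4_two_mul]
    exact Int.modEq_add_fac_self.trans (Int.pow_four_sub_modEq_of_odd hx m)
  · rw [D4t_two_mul]
    exact Int.modEq_add_fac_self.trans (Int.pow_four_sub_modEq_of_odd hx m)
end

section
/- For all integers $k, l, m, n$: (1) $D_4(2k, 2l+1, 2m+1, 2n+1) \equiv 8(k + l + n) - 3 \pmod{16}$; (2) $\widetilde{D}_4(2k, 2l+1, 2m+1, 2n+1) \equiv 8(k + l + n) + 1 \pmod{16}$. -/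
/-!
Both forms are `α² ∓ β²` with `α, β` quadratic. For `D₄`, multiplying
`a + b g + c g² + d g³ ∈ ℤ[C₄]` by its image under `g ↦ -g` gives `α + β g²` with `(g²)² = 1`,
whose norm is `α² - β²`; `D̃₄` is the same construction with `(g²)² = -1`.
At `(2k, 2l+1, 2m+1, 2n+1)` the residues of `α` and `β` modulo `8` follow from parity alone
(odd squares are `1` and `4k² ≡ 4k` mod `8`), and squaring turns a congruence modulo an even `N`
into one modulo `2N`.
-/

theorem D4_eq_sq_sub_sq {R : Type*} [CommRing R] (a b c d : R) :
    D4 a b c d = (a ^ 2 + c ^ 2 - 2 * b * d) ^ 2 - (b ^ 2 + d ^ 2 - 2 * a * c) ^ 2 := by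
  rw [D4, Matrix.det_succ_row_zero]
  simp [Fin.sum_univ_succ, Matrix.det_fin_three, Fin.succAbove]
  ring

namespace Int

theorem ModEq.sq_two_mul {n a b : ℤ} (hn : Even n) (h : a ≡ b [ZMOD n]) :
    a ^ 2 ≡ b ^ 2 [ZMOD 2 * n] := by
  obtain ⟨t, ht⟩ := modEq_iff_dvd.1 h
  obtain ⟨r, rfl⟩ := hn
  exact modEq_iff_dvd.2 ⟨a * t + r * t ^ 2, by linear_combination (b + a + (r + r) * t) * ht⟩

theorem two_mul_sq_modEq (k : ℤ) : (2 * k) ^ 2 ≡ 4 * k [ZMOD 8] := by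
  obtain ⟨j, hj⟩ := k.even_mul_pred_self
  exact modEq_iff_dvd.2 ⟨-j, by linear_combination -4 * hj⟩

theorem two_mul_add_one_sq_modEq (m : ℤ) : (2 * m + 1) ^ 2 ≡ 1 [ZMOD 8] :=
  (modEq_iff_dvd.2 (eight_dvd_sq_sub_one_of_odd (odd_two_mul_add_one m))).symm

end Int

section EvenFirst

variable (k l m n : ℤ)

theorem D4_even_first_modEq :
    D4 (2 * k) (2 * l + 1) (2 * m + 1) (2 * n + 1) ≡ 8 * (k + l + n) - 3 [ZMOD 16] := by
  have hα : (2 * k) ^ 2 + (2 * m + 1) ^ 2 - 2 * (2 * l + 1) * (2 * n + 1) ≡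
      4 * (k + l + n) - 1 [ZMOD 8] :=
    calc _ ≡ 4 * k + 1 - 2 * (2 * l + 1) * (2 * n + 1) [ZMOD 8] := by
          gcongr
          · exact Int.two_mul_sq_modEq k
          · exact Int.two_mul_add_one_sq_modEq m
      _ ≡ _ [ZMOD 8] := Int.modEq_iff_dvd.2 ⟨l + n + l * n, by ring⟩
  have hβ : (2 * l + 1) ^ 2 + (2 * n + 1) ^ 2 - 2 * (2 * k) * (2 * m + 1) ≡ 4 * k + 2 [ZMOD 8] :=
    calc _ ≡ 1 + 1 - 2 * (2 * k) * (2 * m + 1) [ZMOD 8] := by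
          gcongr <;> exact Int.two_mul_add_one_sq_modEq _
      _ ≡ _ [ZMOD 8] := Int.modEq_iff_dvd.2 ⟨k + k * m, by ring⟩
  rw [D4_eq_sq_sub_sq]
  calc _ ≡ (4 * (k + l + n) - 1) ^ 2 - (4 * k + 2) ^ 2 [ZMOD 16] :=
        (hα.sq_two_mul (by decide)).sub (hβ.sq_two_mul (by decide))
    _ ≡ _ [ZMOD 16] := Int.modEq_iff_dvd.2 ⟨(k + l + n) - (k + l + n) ^ 2 + k ^ 2 + k, by ring⟩

theorem D4t_even_first_modEq :
    D4t (2 * k) (2 * l + 1) (2 * m + 1) (2 * n + 1) ≡ 8 * (k + l + n) + 1 [ZMOD 16] := by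
  have hα : (2 * k) ^ 2 - (2 * m + 1) ^ 2 + 2 * (2 * l + 1) * (2 * n + 1) ≡
      4 * (k + l + n) + 1 [ZMOD 8] :=
    calc _ ≡ 4 * k - 1 + 2 * (2 * l + 1) * (2 * n + 1) [ZMOD 8] := by
          gcongr
          · exact Int.two_mul_sq_modEq k
          · exact Int.two_mul_add_one_sq_modEq m
      _ ≡ _ [ZMOD 8] := Int.modEq_iff_dvd.2 ⟨-(l * n), by ring⟩
  have hβ : (2 * l + 1) ^ 2 - (2 * n + 1) ^ 2 - 2 * (2 * k) * (2 * m + 1) ≡ 4 * k [ZMOD 8] :=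
    calc _ ≡ 1 - 1 - 2 * (2 * k) * (2 * m + 1) [ZMOD 8] := by
          gcongr <;> exact Int.two_mul_add_one_sq_modEq _
      _ ≡ _ [ZMOD 8] := Int.modEq_iff_dvd.2 ⟨k + k * m, by ring⟩
  rw [D4t]
  calc _ ≡ (4 * (k + l + n) + 1) ^ 2 + (4 * k) ^ 2 [ZMOD 16] :=
        (hα.sq_two_mul (by decide)).add (hβ.sq_two_mul (by decide))
    _ ≡ _ [ZMOD 16] := Int.modEq_iff_dvd.2 ⟨-(k + l + n) ^ 2 - k ^ 2, by ring⟩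

end EvenFirst

/-- `D₄(2k, 2l+1, 2m+1, 2n+1) ≡ 8(k+l+n) - 3` and
`D̃₄(2k, 2l+1, 2m+1, 2n+1) ≡ 8(k+l+n) + 1 (mod 16)`. -/
theorem D4_D4t_even_first_mod_sixteen (k l m n : ℤ) :
    (D4 (2 * k) (2 * l + 1) (2 * m + 1) (2 * n + 1) ≡ 8 * (k + l + n) - 3 [ZMOD 16]) ∧
    (D4t (2 * k) (2 * l + 1) (2 * m + 1) (2 * n + 1) ≡ 8 * (k + l + n) + 1 [ZMOD 16]) :=
  ⟨D4_even_first_modEq k l m n, D4t_even_first_modEq k l m n⟩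
end

section
/- The following hold: (1) if $p$ is a prime with $p \equiv -3 \pmod 8$, then there exist integers $k, l$ such that $2p = (8k + 3)^2 + (8l + 1)^2$; (2) if $p$ is a prime with $p \equiv 3 \pmod 8$, then there exist integers $k, l$ such that $p = (4k - 1)^2 + 2(4l - 1)^2$; (3) if $p$ is a prime with $p \equiv 1 \pmod 8$ and $p = a^2 + b^2$ for integers $a, b$ with $a + b \equiv \pm 3 \pmod 8$, then there exist integers $k, l, m, n$ such that $2p = \big\{(4k-1)^2 - (4m-2)^2 + 2(2l-1)(4n)\big\}^2 + \big\{(2l-1)^2 - (4n)^2 - 2(4k-1)(4m-2)\big\}^2$. -/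
open Zsqrtd
local notation "ℤi" => GaussianInt


namespace PQR19

/-- parity of a square -/
lemma sq_par (x : ℤ) : x ^ 2 % 2 = x % 2 := by
  rcases (by omega : x % 2 = 0 ∨ x % 2 = 1) with h | h
  · obtain ⟨k, hk⟩ : ∃ k, x = 2 * k := ⟨x / 2, by omega⟩
    obtain ⟨M, hM⟩ : ∃ M, x ^ 2 = 2 * M := ⟨2*k^2, by rw [hk]; ring⟩
    omega
  · obtain ⟨k, hk⟩ : ∃ k, x = 2 * k + 1 := ⟨x / 2, by omega⟩
    obtain ⟨M, hM⟩ : ∃ M, x ^ 2 = 2 * M + 1 := ⟨2*k^2+2*k, by rw [hk]; ring⟩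
    omega

/-- odd square mod 8 -/
lemma odd_sq8 {x : ℤ} (h : x % 2 = 1) : x ^ 2 % 8 = 1 := by
  obtain ⟨k, hk⟩ : ∃ k, x = 2 * k + 1 := ⟨x / 2, by omega⟩
  obtain ⟨m, hm⟩ := Int.even_mul_succ_self k
  obtain ⟨M, hM⟩ : ∃ M, x ^ 2 = 8 * M + 1 := ⟨m, by rw [hk]; nlinarith [hm]⟩
  omega

lemma even_sq4 {x : ℤ} (h : x % 2 = 0) : x ^ 2 % 4 = 0 := by
  obtain ⟨k, hk⟩ : ∃ k, x = 2 * k := ⟨x / 2, by omega⟩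
  obtain ⟨M, hM⟩ : ∃ M, x ^ 2 = 4 * M := ⟨k^2, by rw [hk]; ring⟩
  omega

lemma sq16_of_35 {x : ℤ} (h : x % 8 = 3 ∨ x % 8 = 5) : x ^ 2 % 16 = 9 := by
  rcases h with h | h
  · obtain ⟨q, hq⟩ : ∃ q, x = 8 * q + 3 := ⟨x / 8, by omega⟩
    obtain ⟨M, hM⟩ : ∃ M, x ^ 2 = 16 * M + 9 := ⟨4*q^2+3*q, by rw [hq]; ring⟩
    omega
  · obtain ⟨q, hq⟩ : ∃ q, x = 8 * q + 5 := ⟨x / 8, by omega⟩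
    obtain ⟨M, hM⟩ : ∃ M, x ^ 2 = 16 * M + 9 := ⟨4*q^2+5*q+1, by rw [hq]; ring⟩
    omega

lemma sq16_of_17 {x : ℤ} (h : x % 8 = 1 ∨ x % 8 = 7) : x ^ 2 % 16 = 1 := by
  rcases h with h | h
  · obtain ⟨q, hq⟩ : ∃ q, x = 8 * q + 1 := ⟨x / 8, by omega⟩
    obtain ⟨M, hM⟩ : ∃ M, x ^ 2 = 16 * M + 1 := ⟨4*q^2+q, by rw [hq]; ring⟩
    omega
  · obtain ⟨q, hq⟩ : ∃ q, x = 8 * q + 7 := ⟨x / 8, by omega⟩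
    obtain ⟨M, hM⟩ : ∃ M, x ^ 2 = 16 * M + 1 := ⟨4*q^2+7*q+3, by rw [hq]; ring⟩
    omega

/-- an odd number whose square is 9 mod 16 is ±3 mod 8 -/
lemma mod8_35 {x : ℤ} (hodd : x % 2 = 1) (h : x ^ 2 % 16 = 9) : x % 8 = 3 ∨ x % 8 = 5 := by
  have h8 : x % 8 = 1 ∨ x % 8 = 3 ∨ x % 8 = 5 ∨ x % 8 = 7 := by omega
  rcases h8 with h8 | h8 | h8 | h8
  · have := sq16_of_17 (Or.inl h8); omega
  · exact Or.inl h8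
  · exact Or.inr h8
  · have := sq16_of_17 (Or.inr h8); omega

lemma mod8_17 {x : ℤ} (hodd : x % 2 = 1) (h : x ^ 2 % 16 = 1) : x % 8 = 1 ∨ x % 8 = 7 := by
  have h8 : x % 8 = 1 ∨ x % 8 = 3 ∨ x % 8 = 5 ∨ x % 8 = 7 := by omega
  rcases h8 with h8 | h8 | h8 | h8
  · exact Or.inl h8
  · have := sq16_of_35 (Or.inl h8); omega
  · have := sq16_of_35 (Or.inr h8); omega
  · exact Or.inr h8

/-- integers: n² = 2e² forces n = 0 -/
lemma sq_ne_two_sq : ∀ n e : ℤ, n ^ 2 = 2 * e ^ 2 → n = 0 := by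
  suffices H : ∀ N : ℕ, ∀ n e : ℤ, n.natAbs ≤ N → n ^ 2 = 2 * e ^ 2 → n = 0 by
    intro n e h; exact H n.natAbs n e le_rfl h
  intro N
  induction N with
  | zero => intro n e h _; omega
  | succ N ih =>
    intro n e hle h
    by_cases hn : n = 0
    · exact hn
    -- e² < n², so |e| < |n|; also n even
    have hne : e.natAbs < n.natAbs := by
      have hn2 : 0 < n ^ 2 := by positivity
      have h1 : e ^ 2 < n ^ 2 := by nlinarith
      have := Int.natAbs_lt_natAbs_of_nonneg_of_lt (sq_nonneg e) h1
      simp only [Int.natAbs_pow] at this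
      exact lt_of_pow_lt_pow_left₀ 2 (Nat.zero_le _) this
    have hev : n % 2 = 0 := by
      have := sq_par n
      have : n ^ 2 % 2 = 0 := by omega
      have := sq_par n; omega
    obtain ⟨m, hm⟩ : ∃ m, n = 2 * m := ⟨n / 2, by omega⟩
    have hn4 : n ^ 2 = 4 * m ^ 2 := by rw [hm]; ring
    have he : e ^ 2 = 2 * m ^ 2 := by linarith
    have he0 : e = 0 := ih e m (by omega) he
    have hm2 : m ^ 2 = 0 := by rw [he0] at he; linarith
    have : m = 0 := by nlinarith [sq_nonneg m]
    omega


lemma Hodd16 {x : ℤ} (h : x % 2 = 1) : x ^ 2 % 16 = 1 ∨ x ^ 2 % 16 = 9 := by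
  have h8 : (x % 8 = 1 ∨ x % 8 = 7) ∨ (x % 8 = 3 ∨ x % 8 = 5) := by omega
  rcases h8 with h8 | h8
  · exact Or.inl (sq16_of_17 h8)
  · exact Or.inr (sq16_of_35 h8)

end PQR19

namespace PQR19

/-- rounding division -/
lemma round_div (x k : ℤ) (hk : 0 < k) : ∃ a : ℤ, 2 * (x - a * k) ≤ k ∧ -k ≤ 2 * (x - a * k) := by
  refine ⟨(2 * x + k) / (2 * k), ?_, ?_⟩ <;>
  · have h1 := Int.mul_ediv_add_emod (2 * x + k) (2 * k)
    have h2 := Int.emod_nonneg (2 * x + k) (by omega : 2 * k ≠ 0)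
    have h3 := Int.emod_lt_of_pos (2 * x + k) (by omega : 0 < 2 * k)
    nlinarith [h1, h2, h3]

/-- descent for the form x² + 2y² -/
lemma descent2 (p : ℤ) (hp : Prime p) (hp2 : 2 < p) :
    ∀ (fuel : ℕ) (k x y : ℤ), x ^ 2 + 2 * y ^ 2 = k * p → 0 < k → k < p → k.natAbs ≤ fuel →
      ∃ X Y : ℤ, X ^ 2 + 2 * Y ^ 2 = p := by
  intro fuel
  induction fuel with
  | zero => intro k x y _ hk _ hle; omega
  | succ N ih =>
    intro k x y hxy hk hkp hle
    rcases eq_or_lt_of_le (by omega : 1 ≤ k) with h1 | h1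
    · exact ⟨x, y, by rw [hxy, ← h1]; ring⟩
    -- k ≥ 2
    obtain ⟨a, ha1, ha2⟩ := round_div x k hk
    obtain ⟨b, hb1, hb2⟩ := round_div y k hk
    obtain ⟨x₀, hx₀⟩ : ∃ x₀ : ℤ, x₀ = x - a * k := ⟨_, rfl⟩
    obtain ⟨y₀, hy₀⟩ : ∃ y₀ : ℤ, y₀ = y - b * k := ⟨_, rfl⟩
    obtain ⟨k', hk'⟩ : ∃ k' : ℤ, k' = p - 2 * (a * x + 2 * b * y) + k * (a ^ 2 + 2 * b ^ 2) :=
      ⟨_, rfl⟩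
    have key0 : x₀ ^ 2 + 2 * y₀ ^ 2 = k * k' := by
      rw [hx₀, hy₀, hk']; linear_combination hxy
    have s1 : (2 * x₀) ^ 2 ≤ k ^ 2 := by rw [hx₀]; nlinarith [ha1, ha2]
    have s2 : (2 * y₀) ^ 2 ≤ k ^ 2 := by rw [hy₀]; nlinarith [hb1, hb2]
    have hb4 : 4 * (x₀ ^ 2 + 2 * y₀ ^ 2) ≤ 3 * k ^ 2 := by nlinarith [s1, s2]
    have hq4 : 4 * (k * k') ≤ 3 * k ^ 2 := by rw [← key0]; exact hb4
    have hq5 : 4 * k' ≤ 3 * k := by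
      refine le_of_mul_le_mul_left ?_ hk
      linarith [hq4]
    have hk'lt : k' < k := by omega
    have hk'pos : 0 < k' := by
      rcases lt_or_ge 0 k' with h | h
      · exact h
      have hkk' : k * k' ≤ 0 := mul_nonpos_of_nonneg_of_nonpos (by omega) h
      have h0 : x₀ ^ 2 + 2 * y₀ ^ 2 ≤ 0 := key0.trans_le hkk'
      have hsx := sq_nonneg x₀
      have hsy := sq_nonneg y₀
      have hx0 : x₀ = 0 := pow_eq_zero_iff (two_ne_zero) |>.mp (by linarith)
      have hy0 : y₀ = 0 := pow_eq_zero_iff (two_ne_zero) |>.mp (by linarith)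
      have hxk : x = a * k := by omega
      have hyk : y = b * k := by omega
      have hdvd : k * (k * (a ^ 2 + 2 * b ^ 2)) = k * p := by
        rw [← hxy, hxk, hyk]; ring
      have hdvd2 : k * (a ^ 2 + 2 * b ^ 2) = p :=
        mul_left_cancel₀ (by omega : k ≠ 0) hdvd
      rcases hp.irreducible.isUnit_or_isUnit hdvd2.symm with hu | hu
      · rw [Int.isUnit_iff] at hu; omega
      · rw [Int.isUnit_iff] at hu
        rcases hu with hu | hu <;> rw [hu] at hdvd2 <;> omega
    refine ih k' (p - a * x - 2 * b * y) (a * y - b * x) ?_ hk'pos (by omega) (by omega)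
    rw [hk']; linear_combination (a ^ 2 + 2 * b ^ 2) * hxy

/-- Part 2 -/
lemma part2 (p : ℕ) (hp : p.Prime) (h8 : p % 8 = 3) :
    ∃ k l : ℤ, (p : ℤ) = (4 * k - 1) ^ 2 + 2 * (4 * l - 1) ^ 2 := by
  haveI : Fact p.Prime := ⟨hp⟩
  have hp2 : p ≠ 2 := by omega
  obtain ⟨r, hr⟩ := (ZMod.exists_sq_eq_neg_two_iff (p := p) hp2).mpr (Or.inr h8)
  obtain ⟨c, hc⟩ : ∃ c : ℤ, (p : ℤ) ∣ c ^ 2 + 2 := by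
    refine ⟨(r.val : ℤ), (ZMod.intCast_zmod_eq_zero_iff_dvd _ _).mp ?_⟩
    push_cast
    rw [ZMod.natCast_val, ZMod.cast_id]
    linear_combination -hr
  have hpz : (2 : ℤ) < (p : ℤ) := by omega
  have hppr : Prime (p : ℤ) := Nat.prime_iff_prime_int.mp hp
  obtain ⟨m, hm⟩ := hc
  obtain ⟨a, ha1, ha2⟩ := round_div c (p : ℤ) (by omega)
  obtain ⟨c₀, hc₀⟩ : ∃ c₀ : ℤ, c₀ = c - a * p := ⟨_, rfl⟩
  obtain ⟨k₀, hk₀⟩ : ∃ k₀ : ℤ, k₀ = m - 2 * a * c + a ^ 2 * p := ⟨_, rfl⟩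
  have hinit : c₀ ^ 2 + 2 * 1 ^ 2 = k₀ * (p : ℤ) := by
    rw [hc₀, hk₀]; linear_combination hm
  have hk₀pos : 0 < k₀ := by nlinarith [hinit, sq_nonneg c₀]
  have s1 : (2 * c₀) ^ 2 ≤ (p : ℤ) ^ 2 := by rw [hc₀]; nlinarith [ha1, ha2]
  have hk₀lt : k₀ < (p : ℤ) := by nlinarith [hinit, s1, hpz]
  obtain ⟨X, Y, hXY⟩ := descent2 (p : ℤ) hppr hpz k₀.natAbs k₀ c₀ 1 hinit hk₀pos hk₀lt le_rfl
  -- X odd, Y odd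
  have hp8 : (p : ℤ) % 8 = 3 := by omega
  have hXodd : X % 2 = 1 := by
    rcases (by omega : X % 2 = 0 ∨ X % 2 = 1) with h | h
    · have := even_sq4 h; omega
    · exact h
  have hYodd : Y % 2 = 1 := by
    rcases (by omega : Y % 2 = 0 ∨ Y % 2 = 1) with h | h
    · have := even_sq4 h
      have := odd_sq8 hXodd
      omega
    · exact h
  rcases (by omega : X % 4 = 1 ∨ X % 4 = 3) with hx4 | hx4 <;>
    rcases (by omega : Y % 4 = 1 ∨ Y % 4 = 3) with hy4 | hy4
  · refine ⟨(1 - X) / 4, (1 - Y) / 4, ?_⟩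
    have e1 : 4 * ((1 - X) / 4) - 1 = -X := by omega
    have e2 : 4 * ((1 - Y) / 4) - 1 = -Y := by omega
    rw [e1, e2]; linear_combination -hXY
  · refine ⟨(1 - X) / 4, (Y + 1) / 4, ?_⟩
    have e1 : 4 * ((1 - X) / 4) - 1 = -X := by omega
    have e2 : 4 * ((Y + 1) / 4) - 1 = Y := by omega
    rw [e1, e2]; linear_combination -hXY
  · refine ⟨(X + 1) / 4, (1 - Y) / 4, ?_⟩
    have e1 : 4 * ((X + 1) / 4) - 1 = X := by omega
    have e2 : 4 * ((1 - Y) / 4) - 1 = -Y := by omega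
    rw [e1, e2]; linear_combination -hXY
  · refine ⟨(X + 1) / 4, (Y + 1) / 4, ?_⟩
    have e1 : 4 * ((X + 1) / 4) - 1 = X := by omega
    have e2 : 4 * ((Y + 1) / 4) - 1 = Y := by omega
    rw [e1, e2]; linear_combination -hXY

end PQR19

namespace PQR19

/-- strict descent inequality -/
lemma strict_int (A B C D n : ℤ) (hA : 2 * (A ^ 2 + B ^ 2) ≤ n) (hC : 2 * (C ^ 2 + D ^ 2) ≤ n)
    (hn : 3 ≤ n) :
    (A ^ 2 - B ^ 2 + 2 * C * D) ^ 2 + (2 * A * B - C ^ 2 + D ^ 2) ^ 2 < n ^ 2 := by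
  obtain ⟨m, hm⟩ : ∃ m : ℤ, m = A ^ 2 + B ^ 2 := ⟨_, rfl⟩
  obtain ⟨m', hm'⟩ : ∃ m' : ℤ, m' = C ^ 2 + D ^ 2 := ⟨_, rfl⟩
  obtain ⟨e, he⟩ : ∃ e : ℤ, e = A * C + B * D := ⟨_, rfl⟩
  obtain ⟨f, hf⟩ : ∃ f : ℤ, f = B * C - A * D := ⟨_, rfl⟩
  have hef : e ^ 2 + f ^ 2 = m * m' := by rw [he, hf, hm, hm']; ring
  have hw : (A ^ 2 - B ^ 2 + 2 * C * D) ^ 2 + (2 * A * B - C ^ 2 + D ^ 2) ^ 2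
      = (m + m') ^ 2 - 2 * (e + f) ^ 2 := by rw [hm, hm', he, hf]; ring
  rw [hw]
  have hm0 : 0 ≤ m := by rw [hm]; positivity
  have hm'0 : 0 ≤ m' := by rw [hm']; positivity
  have hAm : 2 * m ≤ n := by rw [hm]; exact hA
  have hCm : 2 * m' ≤ n := by rw [hm']; exact hC
  rcases lt_or_eq_of_le (by omega : m + m' ≤ n) with hlt | heq
  · nlinarith [sq_nonneg (e + f)]
  · have hmm : m = m' := by omega
    have hne : e + f ≠ 0 := by
      intro h0
      have hf' : f = -e := by omega
      have h2 : m ^ 2 = 2 * e ^ 2 := by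
        rw [hf'] at hef
        have : 2 * e ^ 2 = m * m' := by linarith [hef]
        rw [← hmm] at this
        nlinarith [this]
      have := sq_ne_two_sq m e h2
      omega
    have h1 : (e + f) ^ 2 ≠ 0 := pow_ne_zero _ hne
    have h2 : 0 ≤ (e + f) ^ 2 := sq_nonneg _
    have h3 : 1 ≤ (e + f) ^ 2 := by omega
    nlinarith [h3]

/-- norm subadditivity squared -/
lemma nsub_int (A B C D : ℤ) :
    (A ^ 2 - B ^ 2 + 2 * C * D) ^ 2 + (2 * A * B - C ^ 2 + D ^ 2) ^ 2
      ≤ ((A ^ 2 + B ^ 2) + (C ^ 2 + D ^ 2)) ^ 2 := by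
  nlinarith [sq_nonneg (A * C + B * D + B * C - A * D)]

end PQR19

namespace PQR19

lemma emit (A B C D : ℤ) (hA : A % 2 = 1) (hB : B % 4 = 2) (hC : C % 2 = 1) (hD : D % 4 = 0) :
    ∃ A' B' C' D' : ℤ, A' % 4 = 3 ∧ B' % 4 = 2 ∧ C' % 2 = 1 ∧ D' % 4 = 0 ∧
      (A' ^ 2 - B' ^ 2 + 2 * C' * D') ^ 2 + (C' ^ 2 - D' ^ 2 - 2 * A' * B') ^ 2 =
      (A ^ 2 - B ^ 2 + 2 * C * D) ^ 2 + (C ^ 2 - D ^ 2 - 2 * A * B) ^ 2 := by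
  rcases (by omega : A % 4 = 1 ∨ A % 4 = 3) with h | h
  · exact ⟨-A, -B, C, D, by omega, by omega, hC, hD, by ring⟩
  · exact ⟨A, B, C, D, h, hB, hC, hD, by ring⟩

/-- core normalization: A, C odd -/
lemma adjust_core (A B C D : ℤ) (hA : A % 2 = 1) (hC : C % 2 = 1)
    (hP : (A ^ 2 - B ^ 2 + 2 * C * D) % 8 = 3 ∨ (A ^ 2 - B ^ 2 + 2 * C * D) % 8 = 5)
    (hQ : (C ^ 2 - D ^ 2 - 2 * A * B) % 8 = 3 ∨ (C ^ 2 - D ^ 2 - 2 * A * B) % 8 = 5) :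
    ∃ A' B' C' D' : ℤ, A' % 4 = 3 ∧ B' % 4 = 2 ∧ C' % 2 = 1 ∧ D' % 4 = 0 ∧
      (A' ^ 2 - B' ^ 2 + 2 * C' * D') ^ 2 + (C' ^ 2 - D' ^ 2 - 2 * A' * B') ^ 2 =
      (A ^ 2 - B ^ 2 + 2 * C * D) ^ 2 + (C ^ 2 - D ^ 2 - 2 * A * B) ^ 2 := by
  have hsqA : ∃ s, A ^ 2 = 8 * s + 1 := ⟨A ^ 2 / 8, by have := odd_sq8 hA; omega⟩
  have hsqC : ∃ s, C ^ 2 = 8 * s + 1 := ⟨C ^ 2 / 8, by have := odd_sq8 hC; omega⟩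
  obtain ⟨sA, hsA⟩ := hsqA
  obtain ⟨sC, hsC⟩ := hsqC
  have hB : B % 2 = 0 := by
    rcases (by omega : B % 2 = 0 ∨ B % 2 = 1) with h | h
    · exact h
    · exfalso
      obtain ⟨sB, hsB⟩ : ∃ s, B ^ 2 = 8 * s + 1 := ⟨B ^ 2 / 8, by have := odd_sq8 h; omega⟩
      obtain ⟨M, hM⟩ : ∃ M, 2 * C * D = 2 * M := ⟨C * D, by ring⟩
      omega
  have hD : D % 2 = 0 := by
    rcases (by omega : D % 2 = 0 ∨ D % 2 = 1) with h | h
    · exact h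
    · exfalso
      obtain ⟨sD, hsD⟩ : ∃ s, D ^ 2 = 8 * s + 1 := ⟨D ^ 2 / 8, by have := odd_sq8 h; omega⟩
      obtain ⟨M, hM⟩ : ∃ M, 2 * A * B = 2 * M := ⟨A * B, by ring⟩
      omega
  rcases (by omega : B % 4 = 0 ∨ B % 4 = 2) with hB4 | hB4 <;>
    rcases (by omega : D % 4 = 0 ∨ D % 4 = 2) with hD4 | hD4
  · -- (0,0) impossible
    exfalso
    obtain ⟨u, hu⟩ : ∃ u, B = 4 * u := ⟨B / 4, by omega⟩
    obtain ⟨sB, hsB⟩ : ∃ s, B ^ 2 = 8 * s := ⟨2 * u ^ 2, by rw [hu]; ring⟩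
    obtain ⟨v, hv⟩ : ∃ v, D = 4 * v := ⟨D / 4, by omega⟩
    obtain ⟨sD, hsD⟩ : ∃ s, 2 * C * D = 8 * s := ⟨C * v, by rw [hv]; ring⟩
    omega
  · -- (0,2) : apply the unit (3+2√2)
    obtain ⟨u, hu⟩ : ∃ u, B = 4 * u := ⟨B / 4, by omega⟩
    obtain ⟨v, hv⟩ : ∃ v, D = 4 * v + 2 := ⟨D / 4, by omega⟩
    obtain ⟨A', B', C', D', h1, h2, h3, h4, h5⟩ :=
      emit (3 * A + 2 * C - 2 * D) (3 * B + 2 * C + 2 * D) (3 * C + 2 * A + 2 * B)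
        (3 * D + 2 * B - 2 * A) (by omega) (by omega) (by omega) (by omega)
    exact ⟨A', B', C', D', h1, h2, h3, h4, by linear_combination h5⟩
  · -- (2,0)
    exact emit A B C D hA hB4 hC hD4
  · -- (2,2) impossible
    exfalso
    obtain ⟨u, hu⟩ : ∃ u, B = 4 * u + 2 := ⟨B / 4, by omega⟩
    obtain ⟨sB, hsB⟩ : ∃ s, B ^ 2 = 8 * s + 4 := ⟨2 * u ^ 2 + 2 * u, by rw [hu]; ring⟩
    obtain ⟨c, hcc⟩ : ∃ c, C = 2 * c + 1 := ⟨C / 2, by omega⟩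
    obtain ⟨v, hv⟩ : ∃ v, D = 4 * v + 2 := ⟨D / 4, by omega⟩
    obtain ⟨sD, hsD⟩ : ∃ s, 2 * C * D = 8 * s + 4 :=
      ⟨2 * c * v + c + v, by rw [hcc, hv]; ring⟩
    omega

/-- full normalization -/
lemma norm_adjust (A B C D : ℤ)
    (hP : (A ^ 2 - B ^ 2 + 2 * C * D) % 8 = 3 ∨ (A ^ 2 - B ^ 2 + 2 * C * D) % 8 = 5)
    (hQ : (C ^ 2 - D ^ 2 - 2 * A * B) % 8 = 3 ∨ (C ^ 2 - D ^ 2 - 2 * A * B) % 8 = 5) :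
    ∃ A' B' C' D' : ℤ, A' % 4 = 3 ∧ B' % 4 = 2 ∧ C' % 2 = 1 ∧ D' % 4 = 0 ∧
      (A' ^ 2 - B' ^ 2 + 2 * C' * D') ^ 2 + (C' ^ 2 - D' ^ 2 - 2 * A' * B') ^ 2 =
      (A ^ 2 - B ^ 2 + 2 * C * D) ^ 2 + (C ^ 2 - D ^ 2 - 2 * A * B) ^ 2 := by
  have hsA := sq_par A
  have hsB := sq_par B
  have hsC := sq_par C
  have hsD := sq_par D
  obtain ⟨MC, hMC⟩ : ∃ M, 2 * C * D = 2 * M := ⟨C * D, by ring⟩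
  obtain ⟨MA, hMA⟩ : ∃ M, 2 * A * B = 2 * M := ⟨A * B, by ring⟩
  have hApar : A % 2 + B % 2 = 1 := by omega
  have hCpar : C % 2 + D % 2 = 1 := by omega
  rcases (by omega : A % 2 = 1 ∨ A % 2 = 0) with hA | hA <;>
    rcases (by omega : C % 2 = 1 ∨ C % 2 = 0) with hC | hC
  · exact adjust_core A B C D hA hC hP hQ
  · -- A odd, C even (D odd) : tuple (-D, C, A, B)
    have e1 : ((-D) ^ 2 - C ^ 2 + 2 * A * B) = -(C ^ 2 - D ^ 2 - 2 * A * B) := by ring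
    have e2 : (A ^ 2 - B ^ 2 - 2 * (-D) * C) = A ^ 2 - B ^ 2 + 2 * C * D := by ring
    obtain ⟨A', B', C', D', h1, h2, h3, h4, h5⟩ :=
      adjust_core (-D) C A B (by omega) hA (by omega) (by omega)
    exact ⟨A', B', C', D', h1, h2, h3, h4, by linear_combination h5⟩
  · -- A even (B odd), C odd : tuple (-C, -D, -B, A)
    have e1 : ((-C) ^ 2 - (-D) ^ 2 + 2 * (-B) * A) = (C ^ 2 - D ^ 2 - 2 * A * B) := by ring
    have e2 : ((-B) ^ 2 - A ^ 2 - 2 * (-C) * (-D)) = -(A ^ 2 - B ^ 2 + 2 * C * D) := by ring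
    obtain ⟨A', B', C', D', h1, h2, h3, h4, h5⟩ :=
      adjust_core (-C) (-D) (-B) A (by omega) (by omega) (by omega) (by omega)
    exact ⟨A', B', C', D', h1, h2, h3, h4, by linear_combination h5⟩
  · -- A even, C even : tuple (-B, A, -D, C)
    have e1 : ((-B) ^ 2 - A ^ 2 + 2 * (-D) * C) = -(A ^ 2 - B ^ 2 + 2 * C * D) := by ring
    have e2 : ((-D) ^ 2 - C ^ 2 - 2 * (-B) * A) = -(C ^ 2 - D ^ 2 - 2 * A * B) := by ring
    obtain ⟨A', B', C', D', h1, h2, h3, h4, h5⟩ :=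
      adjust_core (-B) A (-D) C (by omega) (by omega) (by omega) (by omega)
    exact ⟨A', B', C', D', h1, h2, h3, h4, by linear_combination h5⟩

end PQR19

namespace PQR19

abbrev gi : ℤi := ⟨0, 1⟩

lemma hd_le : (-1 : ℤ) ≤ 0 := by norm_num
lemma hd_lt : (-1 : ℤ) < 0 := by norm_num

lemma norm_eq (z : ℤi) : z.norm = z.re ^ 2 + z.im ^ 2 := by
  simp [Zsqrtd.norm_def]; ring

lemma w_re (s t : ℤi) : (s ^ 2 - gi * t ^ 2).re = s.re ^ 2 - s.im ^ 2 + 2 * t.re * t.im := by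
  simp [pow_two, Zsqrtd.re_mul, Zsqrtd.im_mul]; ring

lemma w_im (s t : ℤi) : (s ^ 2 - gi * t ^ 2).im = 2 * s.re * s.im - t.re ^ 2 + t.im ^ 2 := by
  simp [pow_two, Zsqrtd.re_mul, Zsqrtd.im_mul]; ring

/-- subadditivity -/
lemma nsub_g (s t : ℤi) : (s ^ 2 - gi * t ^ 2).norm ≤ (s.norm + t.norm) ^ 2 := by
  rw [norm_eq, w_re, w_im, norm_eq s, norm_eq t]
  exact nsub_int s.re s.im t.re t.im

/-- Gaussian rounding division -/
lemma round_div_g (x μ : ℤi) (hμ : 0 < μ.norm) : ∃ q : ℤi, 2 * (x - q * μ).norm ≤ μ.norm := by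
  obtain ⟨n, hn⟩ : ∃ n : ℤ, n = μ.norm := ⟨_, rfl⟩
  obtain ⟨a, ha1, ha2⟩ := round_div (x * star μ).re n (by omega)
  obtain ⟨b, hb1, hb2⟩ := round_div (x * star μ).im n (by omega)
  refine ⟨⟨a, b⟩, ?_⟩
  have key : (x - ⟨a, b⟩ * μ) * star μ = ⟨(x * star μ).re - a * n, (x * star μ).im - b * n⟩ := by
    have h1 : (μ * star μ : ℤi) = (n : ℤi) := by rw [hn, ← Zsqrtd.norm_eq_mul_conj]
    have h2 : (x - ⟨a, b⟩ * μ) * star μ = x * star μ - ⟨a, b⟩ * (μ * star μ) := by ring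
    rw [h2, h1]
    ext <;> simp [Zsqrtd.re_mul, Zsqrtd.im_mul] <;> ring
  have hnorm : (x - ⟨a, b⟩ * μ).norm * n =
      ((x * star μ).re - a * n) ^ 2 + ((x * star μ).im - b * n) ^ 2 := by
    have h3 := congrArg Zsqrtd.norm key
    rw [Zsqrtd.norm_mul, Zsqrtd.norm_conj] at h3
    rw [hn, h3, norm_eq]
    simp [← hn]
  have hb4 : 4 * ((x - ⟨a, b⟩ * μ).norm * n) ≤ 2 * n ^ 2 := by
    rw [hnorm]; nlinarith [ha1, ha2, hb1, hb2]
  have : 2 * (x - ⟨a, b⟩ * μ).norm * n ≤ n * n := by nlinarith [hb4]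
  rw [hn] at *
  exact le_of_mul_le_mul_right (by linarith [this]) hμ

/-- i is not a square-ratio: s² = i t² forces s = t = 0 -/
lemma isq (s t : ℤi) (h : s ^ 2 = gi * t ^ 2) : s = 0 ∧ t = 0 := by
  have key : (s * star t) ^ 2 = gi * ((t.norm : ℤ) : ℤi) ^ 2 := by
    rw [Zsqrtd.norm_eq_mul_conj]
    linear_combination (star t) ^ 2 * h
  have hre := congrArg Zsqrtd.re key
  have him := congrArg Zsqrtd.im key
  obtain ⟨e, he⟩ : ∃ e : ℤ, e = (s * star t).re := ⟨_, rfl⟩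
  obtain ⟨f, hf⟩ : ∃ f : ℤ, f = (s * star t).im := ⟨_, rfl⟩
  simp [pow_two, Zsqrtd.re_mul, Zsqrtd.im_mul, ← he, ← hf] at hre him
  -- hre : e*e - f*f = 0  (roughly), him : e*f + f*e = t.norm * t.norm
  have ht : t.norm = 0 := by
    have hef : e ^ 2 = f ^ 2 := by nlinarith [hre]
    have hm : t.norm ^ 2 = 2 * (e * f) := by nlinarith [him]
    rcases mul_eq_zero.mp (by nlinarith [hef] : (e - f) * (e + f) = 0) with h0 | h0
    · have : e = f := by omega
      have : t.norm ^ 2 = 2 * f ^ 2 := by rw [hm, this]; ring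
      exact sq_ne_two_sq _ _ this
    · have : e = -f := by omega
      have h2 : t.norm ^ 2 = -2 * f ^ 2 := by rw [hm, this]; ring
      have := sq_nonneg t.norm
      have := sq_nonneg f
      have : t.norm ^ 2 = 0 := by nlinarith
      exact pow_eq_zero_iff two_ne_zero |>.mp this
  have ht0 : t = 0 := (Zsqrtd.norm_eq_zero_iff hd_lt t).mp ht
  have hs0 : s ^ 2 = 0 := by rw [h, ht0]; ring
  exact ⟨pow_eq_zero_iff two_ne_zero |>.mp hs0, ht0⟩

/-- prime of prime norm -/
lemma prime_of_norm_prime (z : ℤi) (h : Prime z.norm) : Prime z := by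
  rw [← UniqueFactorizationMonoid.irreducible_iff_prime]
  constructor
  · intro hu
    rw [← Zsqrtd.norm_eq_one_iff' hd_le] at hu
    exact (hu ▸ h).not_unit isUnit_one
  · intro x y hxy
    have hn : z.norm = x.norm * y.norm := by rw [hxy, Zsqrtd.norm_mul]
    rcases h.irreducible.isUnit_or_isUnit hn with hu | hu
    · left
      rw [Int.isUnit_iff] at hu
      rcases hu with hu | hu
      · exact (Zsqrtd.norm_eq_one_iff' hd_le x).mp hu
      · have := Zsqrtd.norm_nonneg hd_le x; omega
    · right
      rw [Int.isUnit_iff] at hu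
      rcases hu with hu | hu
      · exact (Zsqrtd.norm_eq_one_iff' hd_le y).mp hu
      · have := Zsqrtd.norm_nonneg hd_le y; omega

end PQR19

namespace PQR19

/-- the (1-ζ) boost: from norm p to norm 2p -/
lemma boost (s t : ℤi) :
    ((s - gi * t) ^ 2 - gi * (t - s) ^ 2).norm = 2 * (s ^ 2 - gi * t ^ 2).norm := by
  have hid : (s - gi * t) ^ 2 - gi * (t - s) ^ 2 = (1 - gi) * (s ^ 2 - gi * t ^ 2) := by ring
  rw [hid, Zsqrtd.norm_mul]
  have : (1 - gi : ℤi).norm = 2 := by decide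
  rw [this]

/-- main descent -/
lemma descent_g (p : ℤ) (hp2 : 2 < p) (π : ℤi) (hπ : Prime π) (hnp : π.norm = p) :
    ∀ fuel : ℕ, ∀ μ s t : ℤi, s ^ 2 - gi * t ^ 2 = π * μ → 0 < μ.norm → μ.norm < p →
      ¬(π ∣ s ∧ π ∣ t) → μ.norm.natAbs ≤ fuel →
      ∃ s' t' : ℤi, (s' ^ 2 - gi * t' ^ 2).norm = 2 * p := by
  intro fuel
  induction fuel with
  | zero => intro μ s t _ h1 _ _ h2; omega
  | succ N ih =>
    intro μ s t hw hμpos hμlt hinv hfuel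
    rcases (by omega : μ.norm = 1 ∨ μ.norm = 2 ∨ 3 ≤ μ.norm) with h1 | h2 | h3
    · -- norm p : boost
      refine ⟨s - gi * t, t - s, ?_⟩
      rw [boost, congrArg Zsqrtd.norm hw, Zsqrtd.norm_mul, hnp, h1, mul_one]
    · -- norm 2p
      refine ⟨s, t, ?_⟩
      rw [congrArg Zsqrtd.norm hw, Zsqrtd.norm_mul, hnp, h2]; ring
    · -- descent step
      have hμ0 : μ ≠ 0 := by
        intro h0; rw [h0, Zsqrtd.norm_zero] at hμpos; omega
      obtain ⟨q, hq⟩ := round_div_g s μ (by omega)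
      obtain ⟨q', hq'⟩ := round_div_g t μ (by omega)
      obtain ⟨s₀, hs₀⟩ : ∃ s₀ : ℤi, s₀ = s - q * μ := ⟨_, rfl⟩
      obtain ⟨t₀, ht₀⟩ : ∃ t₀ : ℤi, t₀ = t - q' * μ := ⟨_, rfl⟩
      obtain ⟨κ, hκ⟩ : ∃ κ : ℤi,
          κ = π - 2 * s * q + gi * (2 * t * q') + q ^ 2 * μ - gi * q' ^ 2 * μ := ⟨_, rfl⟩
      have hμκ : s₀ ^ 2 - gi * t₀ ^ 2 = μ * κ := by
        rw [hs₀, ht₀, hκ]; linear_combination hw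
      by_cases hzero : s₀ = 0 ∧ t₀ = 0
      · -- μ ∣ s and μ ∣ t : contradiction with the invariant
        exfalso
        have hs : s = q * μ := by
          have := hzero.1; rw [hs₀] at this; linear_combination this
        have ht : t = q' * μ := by
          have := hzero.2; rw [ht₀] at this; linear_combination this
        have hfac : π * μ = μ * (μ * (q ^ 2 - gi * q' ^ 2)) := by
          rw [← hw, hs, ht]; ring
        have hfac2 : π = μ * (q ^ 2 - gi * q' ^ 2) := by
          have h5 : μ * π = μ * (μ * (q ^ 2 - gi * q' ^ 2)) := by
            rw [← hfac]; ring
          exact mul_left_cancel₀ hμ0 h5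
        rcases hπ.irreducible.isUnit_or_isUnit hfac2 with hu | hu
        · rw [← Zsqrtd.norm_eq_one_iff' hd_le] at hu; omega
        · have hdvdμ : π ∣ μ := by
            obtain ⟨w, hw2, hw3⟩ := isUnit_iff_exists.mp hu
            exact ⟨w, by rw [hfac2]; rw [mul_assoc, hw2, mul_one]⟩
          exact hinv ⟨dvd_trans hdvdμ ⟨q, by rw [hs]; ring⟩,
                      dvd_trans hdvdμ ⟨q', by rw [ht]; ring⟩⟩
      · -- genuine descent
        have hκ0 : κ ≠ 0 := by
          intro h0
          rw [h0, mul_zero] at hμκ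
          have hsq : s₀ ^ 2 = gi * t₀ ^ 2 := by linear_combination hμκ
          exact hzero (isq _ _ hsq)
        have hκpos : 0 < κ.norm := by
          rcases lt_or_eq_of_le (Zsqrtd.norm_nonneg hd_le κ) with h | h
          · exact h
          · exact absurd ((Zsqrtd.norm_eq_zero_iff hd_lt κ).mp h.symm) hκ0
        -- strict inequality
        have hstrict : (s₀ ^ 2 - gi * t₀ ^ 2).norm < μ.norm ^ 2 := by
          rw [norm_eq, w_re, w_im]
          have e1 : 2 * (s₀.re ^ 2 + s₀.im ^ 2) ≤ μ.norm := by
            rw [← norm_eq]; rw [hs₀]; exact hq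
          have e2 : 2 * (t₀.re ^ 2 + t₀.im ^ 2) ≤ μ.norm := by
            rw [← norm_eq]; rw [ht₀]; exact hq'
          exact strict_int _ _ _ _ _ e1 e2 h3
        have hκlt : κ.norm < μ.norm := by
          have h5 : μ.norm * κ.norm < μ.norm ^ 2 := by
            rw [← Zsqrtd.norm_mul, ← hμκ]; exact hstrict
          nlinarith [h5, hμpos]
        -- new witnesses
        obtain ⟨s', hs'⟩ : ∃ s' : ℤi, s' = π - (s * q - gi * t * q') := ⟨_, rfl⟩
        obtain ⟨t', ht'⟩ : ∃ t' : ℤi, t' = s * q' - q * t := ⟨_, rfl⟩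
        have hw' : s' ^ 2 - gi * t' ^ 2 = π * κ := by
          rw [hs', ht', hκ]; linear_combination (q ^ 2 - gi * q' ^ 2) * hw
        have hinv' : ¬(π ∣ s' ∧ π ∣ t') := by
          rintro ⟨⟨α, hα⟩, ⟨β, hβ⟩⟩
          have hπκ : π * κ = π * (π * (α ^ 2 - gi * β ^ 2)) := by
            rw [← hw', hα, hβ]; ring
          have : κ = π * (α ^ 2 - gi * β ^ 2) := mul_left_cancel₀ hπ.ne_zero hπκ
          have hdvd : p ∣ κ.norm := ⟨(α ^ 2 - gi * β ^ 2).norm, by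
            rw [this, Zsqrtd.norm_mul, hnp]⟩
          have := Int.le_of_dvd hκpos hdvd
          omega
        exact ih κ s' t' hw' hκpos (by omega) hinv' (by omega)

end PQR19

namespace PQR19

/-- existence of c with p ∣ c⁴ + 1 -/
lemma eighth_root (p : ℕ) (hp : p.Prime) (h8 : p % 8 = 1) : ∃ c : ℤ, (p : ℤ) ∣ c ^ 4 + 1 := by
  haveI : Fact p.Prime := ⟨hp⟩
  have hp2 : p ≠ 2 := by omega
  obtain ⟨i0, hi0⟩ := ZMod.exists_sq_eq_neg_one_iff (p := p) |>.mpr (by omega : p % 4 ≠ 3)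
  obtain ⟨r, hr⟩ := (ZMod.exists_sq_eq_two_iff (p := p) hp2).mpr (Or.inl h8)
  have hr0 : r ≠ 0 := by
    intro h0
    rw [h0, mul_zero] at hr
    have : ((2 : ℕ) : ZMod p) = 0 := by exact_mod_cast hr
    rw [ZMod.natCast_eq_zero_iff] at this
    have h2 := Nat.le_of_dvd (by norm_num) this
    have := hp.two_le
    omega
  obtain ⟨ξ, hξ⟩ : ∃ ξ : ZMod p, ξ = (1 + i0) * r⁻¹ := ⟨_, rfl⟩
  have hr4 : r ^ 4 = 4 := by linear_combination (-(r*r) - 2) * hr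
  have hi4 : (1 + i0) ^ 4 = -4 := by linear_combination (-(i0*i0) - 5 - 4*i0) * hi0
  have hξ4 : ξ ^ 4 = -1 := by
    have hkey : ξ ^ 4 * r ^ 4 = (1 + i0) ^ 4 := by
      rw [hξ]
      field_simp
    rw [hr4, hi4] at hkey
    have h4 : (4 : ZMod p) ≠ 0 := by
      intro h0
      have : ((4 : ℕ) : ZMod p) = 0 := by exact_mod_cast h0
      rw [ZMod.natCast_eq_zero_iff] at this
      have h2 := Nat.le_of_dvd (by norm_num) this
      have := hp.two_le
      omega
    have h5 : ξ ^ 4 * 4 = (-1) * 4 := by rw [hkey]; ring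
    exact mul_right_cancel₀ h4 h5
  refine ⟨(ξ.val : ℤ), ?_⟩
  rw [← ZMod.intCast_zmod_eq_zero_iff_dvd]
  push_cast
  rw [ZMod.natCast_val, ZMod.cast_id, hξ4]
  ring

end PQR19

namespace PQR19

lemma sq2 (x y : ℤ) (h : x ^ 2 + y ^ 2 = 2) : (x = 1 ∨ x = -1) ∧ (y = 1 ∨ y = -1) := by
  have hx : -1 ≤ x ∧ x ≤ 1 := by
    constructor <;> nlinarith [sq_nonneg y, sq_nonneg (x - 1), sq_nonneg (x + 1)]
  have hy : -1 ≤ y ∧ y ≤ 1 := by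
    constructor <;> nlinarith [sq_nonneg x, sq_nonneg (y - 1), sq_nonneg (y + 1)]
  have hx0 : x ≠ 0 := by
    intro h0
    have h2 : y ^ 2 = 2 * 1 ^ 2 := by rw [h0] at h; linarith [h]
    have := sq_ne_two_sq y 1 h2
    rw [this, h0] at h; norm_num at h
  have hy0 : y ≠ 0 := by
    intro h0
    have h2 : x ^ 2 = 2 * 1 ^ 2 := by rw [h0] at h; linarith [h]
    have := sq_ne_two_sq x 1 h2
    rw [this, h0] at h; norm_num at h
  constructor <;> omega

lemma diff35 (p a b : ℤ) (hab : a ^ 2 + b ^ 2 = p) (h8 : p % 8 = 1)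
    (hs : (a + b) % 8 = 3 ∨ (a + b) % 8 = 5) : (a - b) % 8 = 3 ∨ (a - b) % 8 = 5 := by
  have hsq := sq16_of_35 hs
  have hid : (a + b) ^ 2 + (a - b) ^ 2 = 2 * p := by linear_combination 2 * hab
  have h16 : (a - b) ^ 2 % 16 = 9 := by omega
  exact mod8_35 (by omega) h16

/-- residues of any decomposition of 2p -/
lemma resid (p a b P Q : ℤ) (hp : Prime p) (hab : a ^ 2 + b ^ 2 = p) (hPQ : P ^ 2 + Q ^ 2 = 2 * p)
    (h8 : p % 8 = 1) (hs : (a + b) % 8 = 3 ∨ (a + b) % 8 = 5) :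
    (P % 8 = 3 ∨ P % 8 = 5) ∧ (Q % 8 = 3 ∨ Q % 8 = 5) := by
  have hd := diff35 p a b hab h8 hs
  obtain ⟨π, hπdef⟩ : ∃ π : ℤi, π = (⟨a, b⟩ : ℤi) := ⟨_, rfl⟩
  have hπn : π.norm = p := by rw [hπdef, norm_eq]; exact hab
  have hπ : Prime π := prime_of_norm_prime π (hπn ▸ hp)
  have hps : ((p : ℤ) : ℤi) = π * star π := by rw [← hπn, Zsqrtd.norm_eq_mul_conj]
  have hPz : (⟨P, Q⟩ : ℤi) * (⟨P, -Q⟩ : ℤi) = ((2 * p : ℤ) : ℤi) := by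
    ext
    · simp [Zsqrtd.re_mul]; linarith [hPQ]
    · simp [Zsqrtd.im_mul]; ring
  have hdvd : π ∣ (⟨P, Q⟩ : ℤi) * (⟨P, -Q⟩ : ℤi) := by
    rw [hPz]
    refine ⟨star π * 2, ?_⟩
    push_cast
    rw [hps]; ring
  have hp0 : p ≠ 0 := hp.ne_zero
  rcases hπ.2.2 _ _ hdvd with hc | hc
  · obtain ⟨τ, hτ⟩ := hc
    have hnτ : p * τ.norm = 2 * p := by
      have := congrArg Zsqrtd.norm hτ
      rw [Zsqrtd.norm_mul, hπn, norm_eq] at this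
      simp at this
      rw [← this]; linarith [hPQ]
    have hτ2 : τ.norm = 2 := by
      have : p * τ.norm = p * 2 := by linarith [hnτ]
      exact mul_left_cancel₀ hp0 this
    rw [norm_eq] at hτ2
    obtain ⟨hx', hy'⟩ := sq2 _ _ hτ2
    rcases hx' with hx | hx <;> rcases hy' with hy | hy <;>
    · have hre := congrArg Zsqrtd.re hτ
      have him := congrArg Zsqrtd.im hτ
      rw [hπdef] at hre him
      simp [Zsqrtd.re_mul, Zsqrtd.im_mul, hx, hy] at hre him
      constructor <;> omega
  · obtain ⟨τ, hτ⟩ := hc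
    have hnτ : p * τ.norm = 2 * p := by
      have := congrArg Zsqrtd.norm hτ
      rw [Zsqrtd.norm_mul, hπn, norm_eq] at this
      simp at this
      rw [← this]; linarith [hPQ]
    have hτ2 : τ.norm = 2 := by
      have : p * τ.norm = p * 2 := by linarith [hnτ]
      exact mul_left_cancel₀ hp0 this
    rw [norm_eq] at hτ2
    obtain ⟨hx', hy'⟩ := sq2 _ _ hτ2
    rcases hx' with hx | hx <;> rcases hy' with hy | hy <;>
    · have hre := congrArg Zsqrtd.re hτ
      have him := congrArg Zsqrtd.im hτ
      rw [hπdef] at hre him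
      simp [Zsqrtd.re_mul, Zsqrtd.im_mul, hx, hy] at hre him
      constructor <;> omega

end PQR19

namespace PQR19

lemma gg : (gi * gi : ℤi) = -1 := by decide

/-- part 3 -/
lemma part3 (p : ℕ) (hp : p.Prime) (a b : ℤ) (h8 : p % 8 = 1) (hab : (p : ℤ) = a ^ 2 + b ^ 2)
    (hs : (a + b) % 8 = 3 ∨ (a + b) % 8 = 5) :
    ∃ k l m n : ℤ, 2 * (p : ℤ) =
      ((4 * k - 1) ^ 2 - (4 * m - 2) ^ 2 + 2 * (2 * l - 1) * (4 * n)) ^ 2 +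
      ((2 * l - 1) ^ 2 - (4 * n) ^ 2 - 2 * (4 * k - 1) * (4 * m - 2)) ^ 2 := by
  have hp2 : 2 < (p : ℤ) := by have := hp.two_le; omega
  have hpzp : Prime ((p : ℕ) : ℤ) := Nat.prime_iff_prime_int.mp hp
  obtain ⟨c, hc⟩ := eighth_root p hp h8
  -- cast the divisibility to ℤ[i]
  have hcast : ((p : ℤ) : ℤi) ∣ ((c : ℤi) ^ 2 - gi) * ((c : ℤi) ^ 2 + gi) := by
    have h1 : ((p : ℤ) : ℤi) ∣ (((c ^ 4 + 1 : ℤ)) : ℤi) := map_dvd (Int.castRingHom ℤi) hc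
    have h2 : (((c ^ 4 + 1 : ℤ)) : ℤi) = ((c : ℤi) ^ 2 - gi) * ((c : ℤi) ^ 2 + gi) := by
      push_cast
      linear_combination gg
    rwa [h2] at h1
  -- choose the right Gaussian prime above p
  obtain ⟨a', b', hπprop⟩ : ∃ a' b' : ℤ, a' ^ 2 + b' ^ 2 = (p : ℤ) ∧
      ((a' + b') % 8 = 3 ∨ (a' + b') % 8 = 5) ∧
      ((⟨a', b'⟩ : ℤi) ∣ (c : ℤi) ^ 2 - gi) := by
    have hπ1n : (⟨a, b⟩ : ℤi).norm = (p : ℤ) := by rw [norm_eq]; exact hab.symm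
    have hπ1 : Prime (⟨a, b⟩ : ℤi) := prime_of_norm_prime _ (hπ1n ▸ hpzp)
    have hps : ((p : ℤ) : ℤi) = (⟨a, b⟩ : ℤi) * star (⟨a, b⟩ : ℤi) := by
      rw [← hπ1n, Zsqrtd.norm_eq_mul_conj]
    have hdvd : (⟨a, b⟩ : ℤi) ∣ ((c : ℤi) ^ 2 - gi) * ((c : ℤi) ^ 2 + gi) :=
      dvd_trans (Dvd.intro _ (by rw [← hps])) hcast
    rcases hπ1.2.2 _ _ hdvd with hca | hca
    · exact ⟨a, b, hab.symm, hs, hca⟩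
    · refine ⟨a, -b, by linarith [hab], ?_, ?_⟩
      · have := diff35 (p : ℤ) a b hab.symm (by omega) hs
        have he : a + -b = a - b := by ring
        rw [he]; exact this
      · have hstar := map_dvd (starRingEnd ℤi) hca
        have h1 : (starRingEnd ℤi) (⟨a, b⟩ : ℤi) = (⟨a, -b⟩ : ℤi) := rfl
        have h2 : (starRingEnd ℤi) ((c : ℤi) ^ 2 + gi) = (c : ℤi) ^ 2 - gi := by
          rw [map_add, map_pow]
          have e1 : (starRingEnd ℤi) (c : ℤi) = (c : ℤi) := by
            ext <;> simp [starRingEnd_apply]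
          have e2 : (starRingEnd ℤi) gi = -gi := rfl
          rw [e1, e2]; ring
        rwa [h1, h2] at hstar
  obtain ⟨hab', hs', hca⟩ := hπprop
  obtain ⟨π, hπdef⟩ : ∃ π : ℤi, π = (⟨a', b'⟩ : ℤi) := ⟨_, rfl⟩
  rw [← hπdef] at hca
  have hπn : π.norm = (p : ℤ) := by rw [hπdef, norm_eq]; exact hab'
  have hπ : Prime π := prime_of_norm_prime _ (hπn ▸ hpzp)
  -- initial data for the descent
  obtain ⟨q, hq⟩ := round_div_g (c : ℤi) π (by rw [hπn]; omega)
  obtain ⟨s1, hs1⟩ : ∃ s1 : ℤi, s1 = (c : ℤi) - q * π := ⟨_, rfl⟩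
  obtain ⟨μc, hμc⟩ := hca
  obtain ⟨μ0, hμ0⟩ : ∃ μ0 : ℤi, μ0 = μc - 2 * (c : ℤi) * q + q ^ 2 * π := ⟨_, rfl⟩
  have hw : s1 ^ 2 - gi * (1 : ℤi) ^ 2 = π * μ0 := by
    rw [hs1, hμ0]; linear_combination hμc
  have hw0 : (s1 ^ 2 - gi * (1 : ℤi) ^ 2) ≠ 0 := by
    intro h0
    have : s1 ^ 2 = gi * (1 : ℤi) ^ 2 := by linear_combination h0
    have := (isq _ _ this).2
    exact one_ne_zero this
  have hwpos : 0 < (s1 ^ 2 - gi * (1 : ℤi) ^ 2).norm := by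
    rcases lt_or_eq_of_le (Zsqrtd.norm_nonneg hd_le _) with h | h
    · exact h
    · exact absurd ((Zsqrtd.norm_eq_zero_iff hd_lt _).mp h.symm) hw0
  have hwnorm : (s1 ^ 2 - gi * (1 : ℤi) ^ 2).norm = (p : ℤ) * μ0.norm := by
    rw [hw, Zsqrtd.norm_mul, hπn]
  have hμpos : 0 < μ0.norm := by
    by_contra h
    push_neg at h
    nlinarith [hwpos, hwnorm, hp2]
  have hs1n : 2 * s1.norm ≤ (p : ℤ) := by rw [hs1, ← hπn]; exact hq
  have hμlt : μ0.norm < (p : ℤ) := by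
    have hup : (s1 ^ 2 - gi * (1 : ℤi) ^ 2).norm ≤ (s1.norm + 1) ^ 2 := by
      have := nsub_g s1 1
      rwa [Zsqrtd.norm_one] at this
    have hsn0 : 0 ≤ s1.norm := Zsqrtd.norm_nonneg hd_le s1
    nlinarith [hwnorm, hup, hs1n, hp2, hμpos]
  have hinv : ¬(π ∣ s1 ∧ π ∣ (1 : ℤi)) := by
    rintro ⟨-, h1⟩
    exact hπ.not_unit (isUnit_of_dvd_one h1)
  obtain ⟨s, t, hst⟩ := descent_g (p : ℤ) hp2 π hπ hπn μ0.norm.natAbs μ0 s1 1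
    hw hμpos hμlt hinv le_rfl
  -- extract integer data
  obtain ⟨A, hA⟩ : ∃ A : ℤ, A = s.re := ⟨_, rfl⟩
  obtain ⟨B, hB⟩ : ∃ B : ℤ, B = s.im := ⟨_, rfl⟩
  obtain ⟨C, hC⟩ : ∃ C : ℤ, C = t.re := ⟨_, rfl⟩
  obtain ⟨D, hD⟩ : ∃ D : ℤ, D = t.im := ⟨_, rfl⟩
  have hPQ : (A ^ 2 - B ^ 2 + 2 * C * D) ^ 2 + (C ^ 2 - D ^ 2 - 2 * A * B) ^ 2 = 2 * (p : ℤ) := by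
    have := hst
    rw [norm_eq, w_re, w_im] at this
    rw [hA, hB, hC, hD]
    linear_combination this
  obtain ⟨hP8, hQ8⟩ := resid (p : ℤ) a' b' (A ^ 2 - B ^ 2 + 2 * C * D)
    (C ^ 2 - D ^ 2 - 2 * A * B) hpzp hab' hPQ (by omega) hs'
  obtain ⟨A', B', C', D', h1, h2, h3, h4, h5⟩ := norm_adjust A B C D hP8 hQ8
  refine ⟨(A' + 1) / 4, (C' + 1) / 2, (B' + 2) / 4, D' / 4, ?_⟩
  have e1 : 4 * ((A' + 1) / 4) - 1 = A' := by omega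
  have e2 : 2 * ((C' + 1) / 2) - 1 = C' := by omega
  have e3 : 4 * ((B' + 2) / 4) - 2 = B' := by omega
  have e4 : 4 * (D' / 4) = D' := by omega
  rw [e1, e2, e3, e4, h5, hPQ]

end PQR19

-- appended to h.lean content for testing
namespace PQR19

set_option maxHeartbeats 1000000 in
lemma part1 (p : ℕ) (hp : p.Prime) (h8 : p % 8 = 5) :
    ∃ k l : ℤ, 2 * (p : ℤ) = (8 * k + 3) ^ 2 + (8 * l + 1) ^ 2 := by
  haveI : Fact p.Prime := ⟨hp⟩
  obtain ⟨a, b, hab⟩ := Nat.Prime.sq_add_sq (p := p) (by omega)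
  have habz : ((a : ℤ)) ^ 2 + ((b : ℤ)) ^ 2 = (p : ℤ) := by exact_mod_cast hab
  obtain ⟨X, hX⟩ : ∃ X : ℤ, X = (a : ℤ) + b := ⟨_, rfl⟩
  obtain ⟨Y, hY⟩ : ∃ Y : ℤ, Y = (a : ℤ) - b := ⟨_, rfl⟩
  have hXY : X ^ 2 + Y ^ 2 = 2 * (p : ℤ) := by rw [hX, hY]; linear_combination 2 * habz
  have hp16 : (2 * (p : ℤ)) % 16 = 10 := by
    have : (p : ℤ) % 8 = 5 := by omega
    omega
  -- X and Y have the same parity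
  have hpar : (X + Y) % 2 = 0 := by
    have h2 : X + Y = 2 * (a : ℤ) := by rw [hX, hY]; ring
    omega
  -- both odd
  have hodd : X % 2 = 1 ∧ Y % 2 = 1 := by
    rcases (by omega : X % 2 = 0 ∨ X % 2 = 1) with h | h
    · have hY2 : Y % 2 = 0 := by omega
      have h1 := even_sq4 h
      have h2 := even_sq4 hY2
      omega
    · exact ⟨h, by omega⟩
  -- case on X² mod 16
  rcases Hodd16 hodd.1 with hx16 | hx16
  · -- X² ≡ 1, Y² ≡ 9
    have hy16 : Y ^ 2 % 16 = 9 := by omega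
    have hy := mod8_35 hodd.2 hy16
    have hx := mod8_17 hodd.1 hx16
    -- Y plays the role of 8k+3, X of 8l+1
    rcases hy with hy | hy
    · rcases hx with hx | hx
      · refine ⟨(Y - 3) / 8, (X - 1) / 8, ?_⟩
        have e1 : 8 * ((Y - 3) / 8) + 3 = Y := by omega
        have e2 : 8 * ((X - 1) / 8) + 1 = X := by omega
        rw [e1, e2]; linarith [hXY]
      · refine ⟨(Y - 3) / 8, (-X - 1) / 8, ?_⟩
        have e1 : 8 * ((Y - 3) / 8) + 3 = Y := by omega
        have e2 : 8 * ((-X - 1) / 8) + 1 = -X := by omega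
        rw [e1, e2]; nlinarith [hXY]
    · rcases hx with hx | hx
      · refine ⟨(-Y - 3) / 8, (X - 1) / 8, ?_⟩
        have e1 : 8 * ((-Y - 3) / 8) + 3 = -Y := by omega
        have e2 : 8 * ((X - 1) / 8) + 1 = X := by omega
        rw [e1, e2]; nlinarith [hXY]
      · refine ⟨(-Y - 3) / 8, (-X - 1) / 8, ?_⟩
        have e1 : 8 * ((-Y - 3) / 8) + 3 = -Y := by omega
        have e2 : 8 * ((-X - 1) / 8) + 1 = -X := by omega
        rw [e1, e2]; nlinarith [hXY]
  · -- X² ≡ 9, Y² ≡ 1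
    have hy16 : Y ^ 2 % 16 = 1 := by omega
    have hx := mod8_35 hodd.1 hx16
    have hy := mod8_17 hodd.2 hy16
    rcases hx with hx | hx
    · rcases hy with hy | hy
      · refine ⟨(X - 3) / 8, (Y - 1) / 8, ?_⟩
        have e1 : 8 * ((X - 3) / 8) + 3 = X := by omega
        have e2 : 8 * ((Y - 1) / 8) + 1 = Y := by omega
        rw [e1, e2]; linarith [hXY]
      · refine ⟨(X - 3) / 8, (-Y - 1) / 8, ?_⟩
        have e1 : 8 * ((X - 3) / 8) + 3 = X := by omega
        have e2 : 8 * ((-Y - 1) / 8) + 1 = -Y := by omega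
        rw [e1, e2]; nlinarith [hXY]
    · rcases hy with hy | hy
      · refine ⟨(-X - 3) / 8, (Y - 1) / 8, ?_⟩
        have e1 : 8 * ((-X - 3) / 8) + 3 = -X := by omega
        have e2 : 8 * ((Y - 1) / 8) + 1 = Y := by omega
        rw [e1, e2]; nlinarith [hXY]
      · refine ⟨(-X - 3) / 8, (-Y - 1) / 8, ?_⟩
        have e1 : 8 * ((-X - 3) / 8) + 3 = -X := by omega
        have e2 : 8 * ((-Y - 1) / 8) + 1 = -Y := by omega
        rw [e1, e2]; nlinarith [hXY]

end PQR19

/-- representations of primes in special quadratic forms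
(Lemma 7.3 of the paper). -/
theorem prime_quadratic_representations (p : ℕ) (hp : p.Prime) :
    (p % 8 = 5 → ∃ k l : ℤ, 2 * (p : ℤ) = (8 * k + 3) ^ 2 + (8 * l + 1) ^ 2) ∧
    (p % 8 = 3 → ∃ k l : ℤ, (p : ℤ) = (4 * k - 1) ^ 2 + 2 * (4 * l - 1) ^ 2) ∧
    (∀ a b : ℤ, p % 8 = 1 → (p : ℤ) = a ^ 2 + b ^ 2 →
      ((a + b) % 8 = 3 ∨ (a + b) % 8 = 5) →
      ∃ k l m n : ℤ, 2 * (p : ℤ) =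
        ((4 * k - 1) ^ 2 - (4 * m - 2) ^ 2 + 2 * (2 * l - 1) * (4 * n)) ^ 2 +
        ((2 * l - 1) ^ 2 - (4 * n) ^ 2 - 2 * (4 * k - 1) * (4 * m - 2)) ^ 2) := by
  refine ⟨PQR19.part1 p hp, PQR19.part2 p hp, ?_⟩
  intro a b h8 hab hs
  exact PQR19.part3 p hp a b h8 hab hs
end
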